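/- arXiv:2510.02583 — 9 statements merged into one kernel-verified Lean document; each statement's English description precedes it below -/
import Mathlib

section
/- There exists an absolute constant C > 0 such that the following holds. Let M be an m×n Boolean matrix of rank r over the reals, and let S be an independent set of columns of M, i.e., a set of column indices such that all subsets of S have pairwise distinct column-sums. Then |S| ≤ C·r·log(r+2). -/
/-!
Fix `r = rank M` rows of `M` spanning its row space. Every entry of `sumc M A` is a linear
function of the corresponding row, so `sumc M A` is determined by its `r` entries at the chosen
rows. For `A ⊆ S` each of these entries is a number of ones of a Boolean row, hence lies in
`{0, …, |S|}`. Independence makes `A ↦ sumc M A` injective on the `2^|S|` subsets of `S`, so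
`2^|S| ≤ (|S| + 1)^r`, which forces `|S| = O(r log (r + 2))`.
-/

/-- The column-sum of a set `A` of columns of `M`: the vector whose `i`-th
entry is `∑ j ∈ A, M i j`. -/
def sumc {m n : ℕ} (M : Matrix (Fin m) (Fin n) ℝ) (A : Finset (Fin n)) :
    Fin m → ℝ :=
  fun i => ∑ j ∈ A, M i j

/-- A set `S` of columns is independent if all subsets of `S` have pairwise
distinct column-sums. -/
def IndepCols {m n : ℕ} (M : Matrix (Fin m) (Fin n) ℝ) (S : Finset (Fin n)) : Prop :=
  ∀ A ⊆ S, ∀ B ⊆ S, sumc M A = sumc M B → A = B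

open Finset Matrix

theorem Matrix.exists_rows_determine_mulVec {m n K : Type*} [Fintype m] [Fintype n] [Field K]
    (M : Matrix m n K) :
    ∃ a : Fin M.rank → m, ∀ x y : n → K,
      (∀ k, (M *ᵥ x) (a k) = (M *ᵥ y) (a k)) → M *ᵥ x = M *ᵥ y := by
  obtain ⟨κ, a, ha, hspan, hli⟩ := exists_linearIndependent' K M.row
  have := Finite.of_injective a ha
  have := Fintype.ofFinite κ
  have hcard : Fintype.card κ = M.rank := by
    rw [M.rank_eq_finrank_span_row, ← hspan, finrank_span_eq_card hli]
  let e := Fintype.equivFinOfCardEq hcard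
  refine ⟨a ∘ e.symm, fun x y hxy ↦ funext fun i ↦ ?_⟩
  -- `(M *ᵥ x) i = M.row i ⬝ᵥ x` is linear in the row, so it suffices to test on a row basis
  have hrows : Set.EqOn ((dotProductBilin K K).flip x) ((dotProductBilin K K).flip y)
      (Set.range (M.row ∘ a)) := by
    rintro _ ⟨k, rfl⟩
    have h := hxy (e k)
    rw [Function.comp_apply, Equiv.symm_apply_apply] at h
    exact h
  have hrow_mem : M.row i ∈ Submodule.span K (Set.range (M.row ∘ a)) :=
    hspan ▸ Submodule.subset_span (Set.mem_range_self i)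
  exact LinearMap.eqOn_span' hrows hrow_mem

theorem sumc_eq_mulVec {m n : ℕ} (M : Matrix (Fin m) (Fin n) ℝ) (A : Finset (Fin n)) :
    sumc M A = M *ᵥ fun j ↦ if j ∈ A then 1 else 0 := by
  ext i
  simp [sumc, mulVec, dotProduct]

theorem sumc_apply_eq_card_filter {m n : ℕ} {M : Matrix (Fin m) (Fin n) ℝ} {i : Fin m}
    (hM : ∀ j, M i j = 0 ∨ M i j = 1) (A : Finset (Fin n)) :
    sumc M A i = #{j ∈ A | M i j = 1} := by
  rw [sumc, ← sum_boole]
  refine sum_congr rfl fun j _ ↦ ?_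
  rcases hM j with h | h <;> simp [h]

theorem two_pow_card_le_of_indepCols {m n : ℕ} {M : Matrix (Fin m) (Fin n) ℝ}
    (hM : ∀ i j, M i j = 0 ∨ M i j = 1) {S : Finset (Fin n)} (hS : IndepCols M S) :
    2 ^ #S ≤ (#S + 1) ^ M.rank := by
  obtain ⟨a, ha⟩ := M.exists_rows_determine_mulVec
  let counts : Finset (Fin n) → Fin M.rank → ℕ := fun A k ↦ #{j ∈ A | M (a k) j = 1}
  have hmaps :
      Set.MapsTo counts S.powerset ↑(Fintype.piFinset fun _ : Fin M.rank ↦ range (#S + 1)) := by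
    intro A hA
    simp only [mem_coe, mem_powerset, Fintype.mem_piFinset, mem_range, Nat.lt_succ_iff] at hA ⊢
    exact fun k ↦ (card_filter_le _ _).trans (card_le_card hA)
  have hinj : Set.InjOn counts S.powerset := by
    intro A hA B hB hAB
    refine hS A (mem_powerset.mp hA) B (mem_powerset.mp hB) ?_
    have hrows : ∀ k, sumc M A (a k) = sumc M B (a k) := fun k ↦ by
      rw [sumc_apply_eq_card_filter (hM _), sumc_apply_eq_card_filter (hM _)]
      exact_mod_cast congrFun hAB k
    simp only [sumc_eq_mulVec] at hrows ⊢
    exact ha _ _ hrows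
  simpa using card_le_card_of_injOn counts hmaps hinj

theorem le_mul_log_of_two_pow_le {s r : ℕ} (h : 2 ^ s ≤ (s + 1) ^ r) :
    (s : ℝ) ≤ 5 * r * Real.log (r + 2) := by
  rcases Nat.eq_zero_or_pos r with rfl | hr
  · obtain rfl : s = 0 := by_contra fun hs ↦ (Nat.one_lt_two_pow hs).not_ge h
    simp
  have hr' : (1 : ℝ) ≤ r := by exact_mod_cast hr
  have hpow : s * Real.log 2 ≤ r * Real.log (s + 1) := by
    have hreal : (2 : ℝ) ^ s ≤ ((s : ℝ) + 1) ^ r := by exact_mod_cast h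
    have := Real.log_le_log (by positivity) hreal
    rwa [Real.log_pow, Real.log_pow] at this
  -- tangent line of `log` at `4r`
  have htangent : Real.log (s + 1) ≤ Real.log (4 * r) + (s + 1) / (4 * r) - 1 := by
    have := Real.log_le_sub_one_of_pos (x := (s + 1) / (4 * r)) (by positivity)
    rw [Real.log_div (by positivity) (by positivity)] at this
    linarith
  have hlog4r : Real.log (4 * r) ≤ 2 * Real.log (r + 2) := by
    rw [← Real.log_rpow (by positivity)]
    exact Real.log_le_log (by positivity) (by norm_num; nlinarith)
  have hlog2 := Real.log_two_gt_d9
  have hscale : r * ((s + 1) / (4 * r)) = ((s : ℝ) + 1) / 4 := by field_simp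
  -- combined: `s log 2 ≤ 2 r log (r + 2) + (s + 1) / 4 - r`, and `log 2 - 1/4 > 2/5`
  nlinarith [Real.log_nonneg (by linarith : (1 : ℝ) ≤ r + 2)]

/-- Any independent set of columns of a Boolean matrix of rank `r` has size
at most `O(r log r)`. -/
theorem indep_cols_card_le :
    ∃ C : ℝ, 0 < C ∧
      ∀ (m n : ℕ) (M : Matrix (Fin m) (Fin n) ℝ),
        (∀ i j, M i j = 0 ∨ M i j = 1) →
        ∀ S : Finset (Fin n), IndepCols M S →
          (S.card : ℝ) ≤ C * (M.rank : ℝ) * Real.log ((M.rank : ℝ) + 2) :=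
  ⟨5, by norm_num, fun _ _ _ hM _ hS ↦
    le_mul_log_of_two_pow_le (two_pow_card_le_of_indepCols hM hS)⟩
end

section
/- Let M be an m×n Boolean matrix and let S be a maximal independent set of columns of M (i.e., S is independent and no column c outside S can be added to S while keeping independence). Then every column c of M can be expressed as a ±1-linear combination of columns in S: there exist disjoint subsets A, B ⊆ S such that c = sumc(A) − sumc(B); equivalently, c = Σ_{s∈S} α_s · s with coefficients α_s ∈ {−1, 0, 1}. -/
lemma sumc_erase {m n : ℕ} (M : Matrix (Fin m) (Fin n) ℝ) (A : Finset (Fin n))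
    {c : Fin n} (hc : c ∈ A) (i : Fin m) :
    sumc M A i = sumc M (A.erase c) i + M i c := by
  simp [sumc, Finset.sum_erase_add A _ hc]

lemma helper {m n : ℕ} (M : Matrix (Fin m) (Fin n) ℝ) (S : Finset (Fin n))
    {c : Fin n} (A B : Finset (Fin n)) (hA : A ⊆ insert c S) (hB : B ⊆ insert c S)
    (hsum : sumc M A = sumc M B) (hcA : c ∈ A) (hcB : c ∉ B) :
    ∃ A' B' : Finset (Fin n), A' ⊆ S ∧ B' ⊆ S ∧ Disjoint A' B' ∧
      ∀ i, M i c = sumc M A' i - sumc M B' i := by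
  set A₀ := A.erase c with hA₀
  have hA₀S : A₀ ⊆ S := fun x hx => by
    rcases Finset.mem_insert.mp (hA (Finset.mem_of_mem_erase hx)) with h | h
    · exact absurd h (Finset.ne_of_mem_erase hx)
    · exact h
  have hBS : B ⊆ S := fun x hx => by
    rcases Finset.mem_insert.mp (hB hx) with h | h
    · exact absurd (h ▸ hx) hcB
    · exact h
  refine ⟨B \ A₀, A₀ \ B, fun x hx => hBS (Finset.mem_sdiff.mp hx).1,
    fun x hx => hA₀S (Finset.mem_sdiff.mp hx).1, disjoint_sdiff_sdiff, fun i => ?_⟩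
  have h1 : M i c = sumc M B i - sumc M A₀ i := by
    have := congrFun hsum i
    rw [sumc_erase M A hcA i] at this
    linarith
  have h2 : sumc M B i = sumc M (B ∩ A₀) i + sumc M (B \ A₀) i := by
    simp [sumc, Finset.sum_inter_add_sum_sdiff]
  have h3 : sumc M A₀ i = sumc M (A₀ ∩ B) i + sumc M (A₀ \ B) i := by
    simp [sumc, Finset.sum_inter_add_sum_sdiff]
  rw [Finset.inter_comm] at h3
  linarith

/-- If `S` is a maximal independent set of columns of a Boolean matrix `M`,
then every column of `M` is a `±1`-linear combination of columns of `S`: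
for every column `c` there are disjoint `A, B ⊆ S` with `c = sumc A - sumc B`. -/
theorem maximal_indep_spans {m n : ℕ} (M : Matrix (Fin m) (Fin n) ℝ)
    (hM : ∀ i j, M i j = 0 ∨ M i j = 1) (S : Finset (Fin n))
    (hS : IndepCols M S)
    (hmax : ∀ c : Fin n, c ∉ S → ¬ IndepCols M (insert c S)) :
    ∀ c : Fin n, ∃ A B : Finset (Fin n), A ⊆ S ∧ B ⊆ S ∧ Disjoint A B ∧
      ∀ i, M i c = sumc M A i - sumc M B i := by
  intro c
  by_cases hc : c ∈ S
  · exact ⟨{c}, ∅, by simpa, by simp, by simp, by simp [sumc]⟩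
  have h := hmax c hc
  unfold IndepCols at h
  push_neg at h
  obtain ⟨A, hA, B, hB, hsum, hne⟩ := h
  by_cases hcA : c ∈ A <;> by_cases hcB : c ∈ B
  · -- c in both: contradiction
    exfalso
    apply hne
    have hA₀S : A.erase c ⊆ S := fun x hx => by
      rcases Finset.mem_insert.mp (hA (Finset.mem_of_mem_erase hx)) with h | h
      · exact absurd h (Finset.ne_of_mem_erase hx)
      · exact h
    have hB₀S : B.erase c ⊆ S := fun x hx => by
      rcases Finset.mem_insert.mp (hB (Finset.mem_of_mem_erase hx)) with h | h
      · exact absurd h (Finset.ne_of_mem_erase hx)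
      · exact h
    have heq : A.erase c = B.erase c := by
      apply hS _ hA₀S _ hB₀S
      funext i
      have := congrFun hsum i
      rw [sumc_erase M A hcA i, sumc_erase M B hcB i] at this
      simpa using (by linarith : sumc M (A.erase c) i = sumc M (B.erase c) i)
    rw [← Finset.insert_erase hcA, ← Finset.insert_erase hcB, heq]
  · exact helper M S A B hA hB hsum hcA hcB
  · obtain ⟨A', B', h1, h2, h3, h4⟩ := helper M S B A hB hA hsum.symm hcB hcA
    exact ⟨A', B', h1, h2, h3, h4⟩
  · -- c in neither: contradiction with independence of S
    exfalso
    apply hne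
    apply hS _ (fun x hx => ?_) _ (fun x hx => ?_) hsum
    · rcases Finset.mem_insert.mp (hA hx) with h | h
      · exact absurd (h ▸ hx) hcA
      · exact h
    · rcases Finset.mem_insert.mp (hB hx) with h | h
      · exact absurd (h ▸ hx) hcB
      · exact h
end

section
/- Let M be an m×n Boolean matrix and let S be a finite set of {0,1}-valued vectors in ℝ^m such that every column of M is a linear combination of the vectors in S with coefficients in {−1, 0, 1}. Then M can be written as a sum of at most 2|S| signed primitive matrices; i.e., the signed rectangle rank of M satisfies ur(M) ≤ 2|S|. -/
/-!
Write column `j` of `M` as `∑ v ∈ S, α j v • v` with `α j v ∈ {-1, 0, 1}`. For each `v ∈ S`, the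
columns where `v` enters with coefficient `1` and those where it enters with `-1` give two
rectangles `v ⊗ 𝟙[α · v = 1]` and `v ⊗ 𝟙[α · v = -1]`, and `M` is the sum over `v ∈ S` of the
first minus the second.
-/

/-- A primitive matrix: an all-1 rectangle, i.e. the outer product of two
{0,1}-valued vectors. -/
def IsPrimitive {m n : ℕ} (R : Matrix (Fin m) (Fin n) ℝ) : Prop :=
  ∃ u : Fin m → ℝ, ∃ v : Fin n → ℝ,
    (∀ i, u i = 0 ∨ u i = 1) ∧ (∀ j, v j = 0 ∨ v j = 1) ∧
    ∀ i j, R i j = u i * v j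

open Finset
open Matrix (vecMulVec vecMulVec_apply vecMulVec_sub)

/-- The signed rectangle rank `ur M` is the least `t` with `IsSignedPrimitiveSum M t`. -/
def IsSignedPrimitiveSum {m n : ℕ} (M : Matrix (Fin m) (Fin n) ℝ) (t : ℕ) : Prop :=
  ∃ (ε : Fin t → ℝ) (R : Fin t → Matrix (Fin m) (Fin n) ℝ),
    (∀ i, ε i = 1 ∨ ε i = -1) ∧ (∀ i, IsPrimitive (R i)) ∧ M = ∑ i, ε i • R i

namespace IsSignedPrimitiveSum

variable {m n : ℕ}

theorem zero : IsSignedPrimitiveSum (0 : Matrix (Fin m) (Fin n) ℝ) 0 :=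
  ⟨Fin.elim0, Fin.elim0, nofun, nofun, by simp⟩

theorem of_isPrimitive {R : Matrix (Fin m) (Fin n) ℝ} (hR : IsPrimitive R) :
    IsSignedPrimitiveSum R 1 :=
  ⟨fun _ => 1, fun _ => R, fun _ => Or.inl rfl, fun _ => hR, by simp⟩

theorem neg {M : Matrix (Fin m) (Fin n) ℝ} {t : ℕ} (hM : IsSignedPrimitiveSum M t) :
    IsSignedPrimitiveSum (-M) t := by
  obtain ⟨ε, R, hε, hR, rfl⟩ := hM
  refine ⟨-ε, R, fun i => by rcases hε i with h | h <;> simp [h], hR, ?_⟩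
  simp [neg_smul, sum_neg_distrib]

theorem add {M N : Matrix (Fin m) (Fin n) ℝ} {s t : ℕ} (hM : IsSignedPrimitiveSum M s)
    (hN : IsSignedPrimitiveSum N t) : IsSignedPrimitiveSum (M + N) (s + t) := by
  obtain ⟨ε, R, hε, hR, rfl⟩ := hM
  obtain ⟨δ, Q, hδ, hQ, rfl⟩ := hN
  refine ⟨Fin.append ε δ, Fin.append R Q, Fin.addCases (by simpa using hε) (by simpa using hδ),
    Fin.addCases (by simpa using hR) (by simpa using hQ), ?_⟩
  simp [Fin.sum_univ_add]

theorem sub {M N : Matrix (Fin m) (Fin n) ℝ} {s t : ℕ} (hM : IsSignedPrimitiveSum M s)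
    (hN : IsSignedPrimitiveSum N t) : IsSignedPrimitiveSum (M - N) (s + t) :=
  sub_eq_add_neg M N ▸ hM.add hN.neg

theorem sum {ι : Type*} {S : Finset ι} {f : ι → Matrix (Fin m) (Fin n) ℝ} {k : ℕ}
    (hf : ∀ v ∈ S, IsSignedPrimitiveSum (f v) k) :
    IsSignedPrimitiveSum (∑ v ∈ S, f v) (S.card * k) := by
  classical
  induction S using Finset.induction_on with
  | empty => simpa using zero
  | insert a S ha ih =>
    rw [sum_insert ha, card_insert_of_notMem ha, add_comm S.card, add_mul, one_mul]
    exact (hf a (mem_insert_self a S)).add (ih fun v hv => hf v (mem_insert_of_mem hv))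

end IsSignedPrimitiveSum

theorem isPrimitive_vecMulVec {m n : ℕ} {u : Fin m → ℝ} {v : Fin n → ℝ}
    (hu : ∀ i, u i = 0 ∨ u i = 1) (hv : ∀ j, v j = 0 ∨ v j = 1) :
    IsPrimitive (vecMulVec u v) :=
  ⟨u, v, hu, hv, vecMulVec_apply u v⟩

noncomputable def levelIndicator {ι : Type*} (f : ι → ℝ) (c : ℝ) : ι → ℝ :=
  fun j => if f j = c then 1 else 0

theorem levelIndicator_eq_zero_or_eq_one {ι : Type*} (f : ι → ℝ) (c : ℝ) (j : ι) :
    levelIndicator f c j = 0 ∨ levelIndicator f c j = 1 := by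
  unfold levelIndicator
  split_ifs <;> simp

theorem eq_levelIndicator_one_sub_levelIndicator_neg_one {ι : Type*} {f : ι → ℝ}
    (hf : ∀ j, f j = -1 ∨ f j = 0 ∨ f j = 1) :
    f = levelIndicator f 1 - levelIndicator f (-1) := by
  ext j
  rcases hf j with h | h | h <;> norm_num [levelIndicator, h]

theorem eq_sum_vecMulVec_of_col_eq {m n ι R : Type*} [CommSemiring R] {M : Matrix m n R}
    {S : Finset ι} {w : ι → m → R} {α : n → ι → R}
    (hM : ∀ j i, M i j = ∑ v ∈ S, α j v * w v i) :
    M = ∑ v ∈ S, vecMulVec (w v) (fun j => α j v) := by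
  ext i j
  simp [hM j i, Matrix.sum_apply, vecMulVec_apply, mul_comm]

theorem ur_le_two_card_general {m n : ℕ} (M : Matrix (Fin m) (Fin n) ℝ)
    (S : Finset (Fin m → ℝ))
    (hS01 : ∀ v ∈ S, ∀ i, v i = 0 ∨ v i = 1)
    (hcomb : ∀ j : Fin n, ∃ α : (Fin m → ℝ) → ℝ,
      (∀ v, α v = -1 ∨ α v = 0 ∨ α v = 1) ∧
      ∀ i, M i j = ∑ v ∈ S, α v * v i) :
    ∃ (t : ℕ) (ε : Fin t → ℝ) (R : Fin t → Matrix (Fin m) (Fin n) ℝ),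
      t ≤ 2 * S.card ∧
      (∀ i, ε i = 1 ∨ ε i = -1) ∧
      (∀ i, IsPrimitive (R i)) ∧
      M = ∑ i, ε i • R i := by
  choose α hα hMα using hcomb
  have hsplit : M = ∑ v ∈ S, (vecMulVec v (levelIndicator (α · v) 1) -
      vecMulVec v (levelIndicator (α · v) (-1))) := by
    rw [eq_sum_vecMulVec_of_col_eq hMα]
    refine sum_congr rfl fun v _ => ?_
    rw [← vecMulVec_sub, ← eq_levelIndicator_one_sub_levelIndicator_neg_one fun j => hα j v]
  have hrect : ∀ v ∈ S, ∀ c, IsSignedPrimitiveSum (vecMulVec v (levelIndicator (α · v) c)) 1 :=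
    fun v hv c => .of_isPrimitive <|
      isPrimitive_vecMulVec (hS01 v hv) (levelIndicator_eq_zero_or_eq_one _ c)
  obtain ⟨ε, R, hε, hR, hM⟩ : IsSignedPrimitiveSum M (S.card * 2) :=
    hsplit ▸ IsSignedPrimitiveSum.sum fun v hv => (hrect v hv 1).sub (hrect v hv (-1))
  exact ⟨S.card * 2, ε, R, by omega, hε, hR, hM⟩

/-- If every column of a Boolean matrix `M` is a linear combination with
coefficients in `{-1, 0, 1}` of a finite set `S` of `{0,1}`-valued vectors,
then `M` is a `±1`-sum of at most `2|S|` primitive matrices. -/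
theorem ur_le_two_card {m n : ℕ} (M : Matrix (Fin m) (Fin n) ℝ)
    (hM : ∀ i j, M i j = 0 ∨ M i j = 1)
    (S : Finset (Fin m → ℝ))
    (hS01 : ∀ v ∈ S, ∀ i, v i = 0 ∨ v i = 1)
    (hcomb : ∀ j : Fin n, ∃ α : (Fin m → ℝ) → ℝ,
      (∀ v, α v = -1 ∨ α v = 0 ∨ α v = 1) ∧
      ∀ i, M i j = ∑ v ∈ S, α v * v i) :
    ∃ (t : ℕ) (ε : Fin t → ℝ) (R : Fin t → Matrix (Fin m) (Fin n) ℝ),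
      t ≤ 2 * S.card ∧
      (∀ i, ε i = 1 ∨ ε i = -1) ∧
      (∀ i, IsPrimitive (R i)) ∧
      M = ∑ i, ε i • R i :=
  ur_le_two_card_general M S hS01 hcomb
end

section
/- There exists an absolute constant c > 0 such that the following holds for every integer ℓ ≥ 2. Let T : Fin n₁ × ⋯ × Fin n_ℓ → ℝ be an order-ℓ Boolean tensor (all values in {0,1}) of tensor rank r. Then T can be written as T = Σ_{i=1}^t ε_i R_i with t ≤ (c·r·log(r+2))^{ℓ−1}, where each ε_i ∈ {1,−1} and each R_i is a primitive tensor. -/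
/-- A rank-1 tensor: `R x = ∏ i, v i (x i)` for some vectors `v i`. -/
def IsRankOneTensor {l : ℕ} {n : Fin l → ℕ} (R : (∀ i, Fin (n i)) → ℝ) : Prop :=
  ∃ v : ∀ i : Fin l, Fin (n i) → ℝ, ∀ x, R x = ∏ i, v i (x i)

/-- The tensor rank: the minimum `r` such that the tensor is a sum of `r`
rank-1 tensors. -/
noncomputable def tensorRank {l : ℕ} {n : Fin l → ℕ}
    (T : (∀ i, Fin (n i)) → ℝ) : ℕ :=
  sInf {r | ∃ R : Fin r → ((∀ i, Fin (n i)) → ℝ),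
    (∀ i, IsRankOneTensor (R i)) ∧ T = ∑ i, R i}

/-- A primitive tensor: a rank-1 tensor with `{0,1}`-valued factors. -/
def IsPrimitiveTensor {l : ℕ} {n : Fin l → ℕ} (R : (∀ i, Fin (n i)) → ℝ) : Prop :=
  ∃ v : ∀ i : Fin l, Fin (n i) → ℝ,
    (∀ i x, v i x = 0 ∨ v i x = 1) ∧ ∀ x, R x = ∏ i, v i (x i)

open Finset Module

/-- A signed decomposition into `t` primitive tensors. -/
def SDecomp {l : ℕ} {n : Fin l → ℕ} (T : (∀ i, Fin (n i)) → ℝ) (t : ℕ) : Prop :=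
  ∃ (ε : Fin t → ℝ) (R : Fin t → ((∀ i, Fin (n i)) → ℝ)),
    (∀ i, ε i = 1 ∨ ε i = -1) ∧ (∀ i, IsPrimitiveTensor (R i)) ∧ T = ∑ i, ε i • R i

lemma SDecomp_zero {l : ℕ} {n : Fin l → ℕ} : SDecomp (0 : (∀ i, Fin (n i)) → ℝ) 0 :=
  ⟨Fin.elim0, Fin.elim0, fun i => i.elim0, fun i => i.elim0, by simp⟩

lemma SDecomp.add {l : ℕ} {n : Fin l → ℕ} {T₁ T₂ : (∀ i, Fin (n i)) → ℝ} {t₁ t₂ : ℕ}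
    (h₁ : SDecomp T₁ t₁) (h₂ : SDecomp T₂ t₂) : SDecomp (T₁ + T₂) (t₁ + t₂) := by
  obtain ⟨ε₁, R₁, hε₁, hR₁, hT₁⟩ := h₁
  obtain ⟨ε₂, R₂, hε₂, hR₂, hT₂⟩ := h₂
  refine ⟨Fin.append ε₁ ε₂, Fin.append R₁ R₂, ?_, ?_, ?_⟩
  · intro i
    refine Fin.addCases (fun j => ?_) (fun j => ?_) i
    · rw [Fin.append_left]; exact hε₁ j
    · rw [Fin.append_right]; exact hε₂ j
  · intro i
    refine Fin.addCases (fun j => ?_) (fun j => ?_) i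
    · rw [Fin.append_left]; exact hR₁ j
    · rw [Fin.append_right]; exact hR₂ j
  · rw [Fin.sum_univ_add]
    simp only [Fin.append_left, Fin.append_right]
    rw [hT₁, hT₂]

lemma SDecomp.neg {l : ℕ} {n : Fin l → ℕ} {T : (∀ i, Fin (n i)) → ℝ} {t : ℕ}
    (h : SDecomp T t) : SDecomp (-T) t := by
  obtain ⟨ε, R, hε, hR, hT⟩ := h
  refine ⟨fun i => -ε i, R, ?_, hR, ?_⟩
  · intro i; rcases hε i with h | h <;> simp [h]
  · rw [hT]; rw [← Finset.sum_neg_distrib]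
    exact Finset.sum_congr rfl fun i _ => by simp [neg_smul]

lemma SDecomp.sum {l : ℕ} {n : Fin l → ℕ} {α : Type*} (s : Finset α)
    (f : α → ((∀ i, Fin (n i)) → ℝ)) (m : α → ℕ)
    (h : ∀ a ∈ s, SDecomp (f a) (m a)) :
    SDecomp (∑ a ∈ s, f a) (∑ a ∈ s, m a) := by
  classical
  induction s using Finset.induction_on with
  | empty => simpa using SDecomp_zero
  | @insert a s ha ih =>
      rw [Finset.sum_insert ha, Finset.sum_insert ha]
      exact (h a (Finset.mem_insert_self a s)).add
        (ih fun b hb => h b (Finset.mem_insert_of_mem hb))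
lemma IsRankOneTensor.smul {m : ℕ} {n : Fin (m+1) → ℕ} {R : (∀ i, Fin (n i)) → ℝ}
    (c : ℝ) (h : IsRankOneTensor R) : IsRankOneTensor (fun x => c * R x) := by
  classical
  obtain ⟨v, hv⟩ := h
  refine ⟨Function.update v 0 (fun a => c * v 0 a), fun x => ?_⟩
  have key : ∀ i ∈ (Finset.univ : Finset (Fin (m+1))).erase 0,
      Function.update v 0 (fun a => c * v 0 a) i (x i) = v i (x i) := by
    intro i hi
    rw [Function.update_of_ne (Finset.mem_erase.mp hi).1]
  show c * R x = _
  rw [hv x,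
    ← Finset.mul_prod_erase Finset.univ
      (fun i => Function.update v 0 (fun a => c * v 0 a) i (x i)) (Finset.mem_univ 0),
    ← Finset.mul_prod_erase Finset.univ (fun i => v i (x i)) (Finset.mem_univ 0),
    Finset.prod_congr rfl key, Function.update_self]
  ring

lemma tensorRank_set_nonempty {m : ℕ} {n : Fin (m+1) → ℕ} (T : (∀ i, Fin (n i)) → ℝ) :
    {r | ∃ R : Fin r → ((∀ i, Fin (n i)) → ℝ),
      (∀ i, IsRankOneTensor (R i)) ∧ T = ∑ i, R i}.Nonempty := by
  classical
  obtain ⟨N, e⟩ : ∃ N, Nonempty (Fin N ≃ (∀ i, Fin (n i))) :=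
    ⟨Fintype.card (∀ i, Fin (n i)), ⟨(Fintype.equivFin _).symm⟩⟩
  obtain ⟨e⟩ := e
  refine ⟨N, fun k => fun x => T (e k) *
      ∏ i, (if x i = (e k) i then (1:ℝ) else 0), ?_, ?_⟩
  · intro k
    exact IsRankOneTensor.smul _ ⟨fun i a => if a = (e k) i then 1 else 0, fun x => rfl⟩
  · funext x
    rw [Finset.sum_apply]
    rw [Equiv.sum_comp e (fun x₀ => T x₀ * ∏ i, (if x i = x₀ i then (1:ℝ) else 0))]
    have hprod : ∀ x₀ : (∀ i, Fin (n i)), (∏ i, if x i = x₀ i then (1:ℝ) else 0) = if x₀ = x then 1 else 0 := by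
      intro x₀
      by_cases h : x₀ = x
      · subst h; simp
      · rw [if_neg h]
        obtain ⟨i, hi⟩ : ∃ i, x i ≠ x₀ i := by
          by_contra hc; push_neg at hc; exact h (funext fun i => (hc i).symm)
        exact Finset.prod_eq_zero (Finset.mem_univ i) (if_neg hi)
    have : ∀ x₀ ∈ (Finset.univ : Finset (∀ i, Fin (n i))),
        T x₀ * ∏ i, (if x i = x₀ i then (1:ℝ) else 0) = if x₀ = x then T x₀ else 0 := by
      intro x₀ _
      rw [hprod x₀]
      by_cases h : x₀ = x <;> simp [h]
    rw [Finset.sum_congr rfl this, Finset.sum_ite_eq' Finset.univ x T, if_pos (Finset.mem_univ x)]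

lemma tensorRank_spec {m : ℕ} {n : Fin (m+1) → ℕ} (T : (∀ i, Fin (n i)) → ℝ) :
    ∃ R : Fin (tensorRank T) → ((∀ i, Fin (n i)) → ℝ),
      (∀ i, IsRankOneTensor (R i)) ∧ T = ∑ i, R i :=
  Nat.sInf_mem (tensorRank_set_nonempty T)

lemma tensorRank_le {l : ℕ} {n : Fin l → ℕ} (T : (∀ i, Fin (n i)) → ℝ) {s : ℕ}
    (R : Fin s → ((∀ i, Fin (n i)) → ℝ)) (h1 : ∀ i, IsRankOneTensor (R i))
    (h2 : T = ∑ i, R i) : tensorRank T ≤ s :=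
  Nat.sInf_le ⟨R, h1, h2⟩

lemma SDecomp.ext_last {m : ℕ} {n : Fin (m+1) → ℕ}
    {w : (∀ i : Fin m, Fin (n i.castSucc)) → ℝ} {t : ℕ} (h : SDecomp w t)
    (Y : Fin (n (Fin.last m)) → ℝ) (hY : ∀ y, Y y = 0 ∨ Y y = 1) :
    SDecomp (fun x : ∀ i, Fin (n i) => w (Fin.init x) * Y (x (Fin.last m))) t := by
  obtain ⟨ε, R, hε, hR, hw⟩ := h
  refine ⟨ε, fun j => fun x => R j (Fin.init x) * Y (x (Fin.last m)), hε, ?_, ?_⟩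
  · intro j
    obtain ⟨v, hv01, hv⟩ := hR j
    refine ⟨Fin.snoc v Y, ?_, ?_⟩
    · intro i
      refine Fin.lastCases ?_ (fun i => ?_) i
      · rw [Fin.snoc_last]; exact hY
      · rw [Fin.snoc_castSucc]; exact hv01 i
    · intro x
      rw [Fin.prod_univ_castSucc]
      simp only [Fin.snoc_castSucc, Fin.snoc_last]
      rw [hv (Fin.init x)]
      rfl
  · funext x
    rw [Finset.sum_apply]
    have h1 : w (Fin.init x) = ∑ j, ε j • R j (Fin.init x) := by
      rw [hw, Finset.sum_apply]
      exact Finset.sum_congr rfl fun j _ => rfl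
    rw [h1, Finset.sum_mul]
    refine Finset.sum_congr rfl fun j _ => ?_
    simp only [Pi.smul_apply, smul_eq_mul]
    ring

lemma SDecomp_order_one {n : Fin 1 → ℕ} (T : (∀ i, Fin (n i)) → ℝ)
    (hT : ∀ x, T x = 0 ∨ T x = 1) : SDecomp T 1 := by
  refine ⟨fun _ => 1, fun _ => T, fun _ => Or.inl rfl, fun _ => ?_, by
    funext x; simp⟩
  refine ⟨fun i j => T (fun k => Fin.cast (congrArg n (Subsingleton.elim i k)) j),
    fun i x => hT _, fun x => ?_⟩
  rw [Fin.prod_univ_one]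
  show T x = T (fun k => Fin.cast (congrArg n (Subsingleton.elim (0 : Fin 1) k)) (x 0))
  have hx : (fun k => Fin.cast (congrArg n (Subsingleton.elim (0 : Fin 1) k)) (x 0)) = x := by
    funext k
    obtain rfl : (0 : Fin 1) = k := Subsingleton.elim _ _
    apply Fin.ext
    simp
  rw [hx]
lemma exists_coord_finset {X : Type*} [Fintype X] :
    ∀ (d : ℕ) (V : Submodule ℝ (X → ℝ)), Module.finrank ℝ V ≤ d →
      ∃ J : Finset X, J.card ≤ d ∧ ∀ v ∈ V, (∀ x ∈ J, v x = 0) → v = 0 := by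
  classical
  intro d
  induction d with
  | zero =>
      intro V hV
      refine ⟨∅, le_rfl, fun v hv _ => ?_⟩
      have hbot : V = ⊥ := Submodule.finrank_eq_zero.mp (Nat.le_zero.mp hV)
      exact (Submodule.eq_bot_iff V).mp hbot v hv
  | succ d ih =>
      intro V hV
      by_cases hbot : ∀ v ∈ V, v = 0
      · exact ⟨∅, Nat.zero_le _, fun v hv _ => hbot v hv⟩
      · push_neg at hbot
        obtain ⟨v₀, hv₀V, hv₀⟩ := hbot
        obtain ⟨x₀, hx₀⟩ : ∃ x₀, v₀ x₀ ≠ 0 := by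
          by_contra hc; push_neg at hc; exact hv₀ (funext hc)
        have hlt : V ⊓ LinearMap.ker (LinearMap.proj (R := ℝ) (φ := fun _ : X => ℝ) x₀) < V := by
          refine lt_of_le_of_ne inf_le_left (fun he => ?_)
          have hm : v₀ ∈ V ⊓ LinearMap.ker (LinearMap.proj (R := ℝ) (φ := fun _ : X => ℝ) x₀) :=
            he.symm ▸ hv₀V
          exact hx₀ ((Submodule.mem_inf.mp hm).2)
        have hrank : Module.finrank ℝ
            (V ⊓ LinearMap.ker (LinearMap.proj (R := ℝ) (φ := fun _ : X => ℝ) x₀) : Submodule ℝ (X → ℝ)) ≤ d := by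
          have := Submodule.finrank_lt_finrank_of_lt hlt
          omega
        obtain ⟨J', hJ'card, hJ'⟩ := ih _ hrank
        refine ⟨insert x₀ J', ?_, ?_⟩
        · calc (insert x₀ J').card ≤ J'.card + 1 := Finset.card_insert_le _ _
            _ ≤ d + 1 := by omega
        · intro v hv hvanish
          have hvx₀ : v x₀ = 0 := hvanish x₀ (Finset.mem_insert_self _ _)
          have hm : v ∈ V ⊓ LinearMap.ker (LinearMap.proj (R := ℝ) (φ := fun _ : X => ℝ) x₀) :=
            Submodule.mem_inf.mpr ⟨hv, by simpa [LinearMap.mem_ker] using hvx₀⟩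
          exact hJ' v hm fun x hx => hvanish x (Finset.mem_insert_of_mem hx)

section Dissoc

variable {M : Type*} [AddCommGroup M] [Module ℝ M]

def Dissoc (W : Finset M) : Prop :=
  ∀ ε : M → ℝ, (∀ w ∈ W, ε w = 1 ∨ ε w = 0 ∨ ε w = -1) →
    (∑ w ∈ W, ε w • w) = 0 → ∀ w ∈ W, ε w = 0

lemma dissoc_empty : Dissoc (∅ : Finset M) :=
  fun _ _ _ w hw => absurd hw (Finset.notMem_empty w)

lemma exists_maximal_dissoc (Z : Finset M) :
    ∃ W, W ⊆ Z ∧ Dissoc W ∧ ∀ W' ⊆ Z, Dissoc W' → W'.card ≤ W.card := by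
  classical
  obtain ⟨W, hW, hmax⟩ := Finset.exists_max_image
    (Z.powerset.filter (fun W => Dissoc W)) Finset.card
    ⟨∅, Finset.mem_filter.mpr ⟨Finset.empty_mem_powerset Z, dissoc_empty⟩⟩
  rw [Finset.mem_filter, Finset.mem_powerset] at hW
  exact ⟨W, hW.1, hW.2, fun W' h1 h2 =>
    hmax W' (Finset.mem_filter.mpr ⟨Finset.mem_powerset.mpr h1, h2⟩)⟩

lemma represent_dissoc {Z W : Finset M} (hWZ : W ⊆ Z) (hdis : Dissoc W)
    (hmax : ∀ W' ⊆ Z, Dissoc W' → W'.card ≤ W.card)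
    {z : M} (hz : z ∈ Z) :
    ∃ κ : M → ℝ, (∀ w, κ w = 1 ∨ κ w = 0 ∨ κ w = -1) ∧ z = ∑ w ∈ W, κ w • w := by
  classical
  by_cases hzW : z ∈ W
  · refine ⟨fun w => if w = z then 1 else 0, fun w => ?_, ?_⟩
    · by_cases h : w = z <;> simp [h]
    · have hcongr : ∀ w ∈ W, (if w = z then (1:ℝ) else 0) • w = if w = z then w else 0 := by
        intro w _; by_cases h : w = z <;> simp [h]
      rw [Finset.sum_congr rfl hcongr, Finset.sum_ite_eq' W z (fun w => w), if_pos hzW]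
  · have hnd : ¬ Dissoc (insert z W) := by
      intro hd
      have hcard := hmax _ (Finset.insert_subset hz hWZ) hd
      rw [Finset.card_insert_of_notMem hzW] at hcard
      omega
    unfold Dissoc at hnd
    push_neg at hnd
    obtain ⟨ε, hvals, hsum, w₀, hw₀, hw₀ne⟩ := hnd
    rw [Finset.sum_insert hzW] at hsum
    by_cases hεz : ε z = 0
    · exfalso
      rw [hεz, zero_smul, zero_add] at hsum
      have hall : ∀ w ∈ W, ε w = 0 :=
        hdis ε (fun w hw => hvals w (Finset.mem_insert_of_mem hw)) hsum
      rcases Finset.mem_insert.mp hw₀ with rfl | hw₀W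
      · exact hw₀ne hεz
      · exact hw₀ne (hall _ hw₀W)
    · have hεz1 : ε z = 1 ∨ ε z = -1 := by
        rcases hvals z (Finset.mem_insert_self _ _) with h | h | h
        · exact Or.inl h
        · exact absurd h hεz
        · exact Or.inr h
      refine ⟨fun w => if w ∈ W then -(ε z) * ε w else 0, fun w => ?_, ?_⟩
      · by_cases hw : w ∈ W
        · simp only [if_pos hw]
          rcases hεz1 with h1 | h1 <;>
            rcases hvals w (Finset.mem_insert_of_mem hw) with h2 | h2 | h2 <;>
              rw [h1, h2] <;> norm_num
        · simp [hw]
      · have hWsum : ∑ w ∈ W, (if w ∈ W then -(ε z) * ε w else 0) • w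
            = ∑ w ∈ W, (-(ε z)) • (ε w • w) := by
          refine Finset.sum_congr rfl fun w hw => ?_
          rw [if_pos hw, mul_smul]
        have hsum' : ∑ w ∈ W, ε w • w = -(ε z • z) :=
          eq_neg_of_add_eq_zero_right hsum
        rw [hWsum, ← Finset.smul_sum, hsum']
        rcases hεz1 with h | h <;> rw [h] <;> simp

end Dissoc

lemma dissoc_card_bound {X : Type*} [Fintype X] (W : Finset (X → ℝ))
    (hW01 : ∀ w ∈ W, ∀ x, w x = 0 ∨ w x = 1) (hdis : Dissoc W)
    {r : ℕ} (V₀ : Submodule ℝ (X → ℝ)) (hWV : ∀ w ∈ W, w ∈ V₀)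
    (hr : Module.finrank ℝ V₀ ≤ r) :
    2 ^ W.card ≤ (W.card + 1) ^ r := by
  classical
  have hspan : Submodule.span ℝ (W : Set (X → ℝ)) ≤ V₀ := Submodule.span_le.mpr hWV
  have hrank : Module.finrank ℝ (Submodule.span ℝ (W : Set (X → ℝ))) ≤ r :=
    le_trans (Submodule.finrank_mono hspan) hr
  obtain ⟨J, hJcard, hJ⟩ := exists_coord_finset r (Submodule.span ℝ (W : Set (X → ℝ))) hrank
  have hcount : ∀ (A : Finset (X → ℝ)), A ⊆ W → ∀ x : X,
      (∑ w ∈ A, w x) = ((A.filter (fun w => w x = 1)).card : ℝ) := by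
    intro A hA x
    rw [← Finset.sum_filter_add_sum_filter_not A (fun w => w x = 1) (fun w => w x)]
    have h1 : ∑ w ∈ A.filter (fun w => w x = 1), w x
        = ((A.filter (fun w => w x = 1)).card : ℝ) := by
      rw [Finset.sum_congr rfl (fun w hw => (Finset.mem_filter.mp hw).2)]
      simp
    have h2 : ∑ w ∈ A.filter (fun w => ¬ w x = 1), w x = 0 := by
      refine Finset.sum_eq_zero fun w hw => ?_
      have hmf := Finset.mem_filter.mp hw
      rcases hW01 w (hA hmf.1) x with h | h
      · exact h
      · exact absurd h hmf.2
    rw [h1, h2, add_zero]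
  have hinj : ∀ A ∈ W.powerset, ∀ B ∈ W.powerset,
      (∀ x ∈ J, (A.filter (fun w => w x = 1)).card = (B.filter (fun w => w x = 1)).card)
      → A = B := by
    intro A hA B hB heq
    have hA' := Finset.mem_powerset.mp hA
    have hB' := Finset.mem_powerset.mp hB
    have hsums : (∑ w ∈ A, w) = ∑ w ∈ B, w := by
      have hmem : (∑ w ∈ A, w) - (∑ w ∈ B, w) ∈ Submodule.span ℝ (W : Set (X → ℝ)) :=
        Submodule.sub_mem _
          (Submodule.sum_mem _ fun w hw => Submodule.subset_span (hA' hw))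
          (Submodule.sum_mem _ fun w hw => Submodule.subset_span (hB' hw))
      have hvan : ∀ x ∈ J, ((∑ w ∈ A, w) - (∑ w ∈ B, w)) x = 0 := by
        intro x hx
        have e1 := hcount A hA' x
        have e2 := hcount B hB' x
        have heval : (∑ w ∈ A, w) x = (∑ w ∈ B, w) x := by
          rw [Finset.sum_apply, Finset.sum_apply, e1, e2, heq x hx]
        simp [heval]
      exact sub_eq_zero.mp (hJ _ hmem hvan)
    have hεvals : ∀ w ∈ W,
        ((if w ∈ A then (1:ℝ) else 0) - (if w ∈ B then 1 else 0)) = 1 ∨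
        ((if w ∈ A then (1:ℝ) else 0) - (if w ∈ B then 1 else 0)) = 0 ∨
        ((if w ∈ A then (1:ℝ) else 0) - (if w ∈ B then 1 else 0)) = -1 := by
      intro w _
      by_cases h1 : w ∈ A <;> by_cases h2 : w ∈ B <;> simp [h1, h2]
    have hεsum : ∑ w ∈ W,
        ((if w ∈ A then (1:ℝ) else 0) - (if w ∈ B then 1 else 0)) • w = 0 := by
      have hterm : ∀ w ∈ W,
          ((if w ∈ A then (1:ℝ) else 0) - (if w ∈ B then 1 else 0)) • w
          = (if w ∈ A then w else 0) - (if w ∈ B then w else 0) := by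
        intro w _
        by_cases h1 : w ∈ A <;> by_cases h2 : w ∈ B <;> simp [h1, h2]
      rw [Finset.sum_congr rfl hterm, Finset.sum_sub_distrib,
        Finset.sum_ite_mem, Finset.sum_ite_mem,
        Finset.inter_eq_right.mpr hA', Finset.inter_eq_right.mpr hB', hsums, sub_self]
    have hzero := hdis _ hεvals hεsum
    apply Finset.Subset.antisymm <;> intro w hw
    · by_contra hwB
      have h1 := hzero w (hA' hw)
      rw [if_pos hw, if_neg hwB] at h1
      norm_num at h1
    · by_contra hwA
      have h1 := hzero w (hB' hw)
      rw [if_neg hwA, if_pos hw] at h1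
      norm_num at h1
  -- injection into J → Fin (k+1)
  have hmain : W.powerset.card ≤ (Finset.univ : Finset (↥J → Fin (W.card + 1))).card := by
    refine Finset.card_le_card_of_injOn
      (fun A => fun x : ↥J =>
        (⟨min ((A.filter (fun w => w (x : X) = 1)).card) W.card,
          Nat.lt_succ_of_le (min_le_right _ _)⟩ : Fin (W.card + 1)))
      (fun A _ => Finset.mem_univ _) ?_
    intro A hA B hB hfeq
    have hA' := Finset.mem_powerset.mp (Finset.mem_coe.mp hA)
    have hB' := Finset.mem_powerset.mp (Finset.mem_coe.mp hB)
    refine hinj A (Finset.mem_coe.mp hA) B (Finset.mem_coe.mp hB) ?_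
    intro x hx
    have := congrFun hfeq (⟨x, hx⟩ : ↥J)
    have hv := Fin.mk.injEq _ _ _ _ ▸ this
    have hcA : (A.filter (fun w => w x = 1)).card ≤ W.card :=
      le_trans (Finset.card_le_card (Finset.filter_subset _ _)) (Finset.card_le_card hA')
    have hcB : (B.filter (fun w => w x = 1)).card ≤ W.card :=
      le_trans (Finset.card_le_card (Finset.filter_subset _ _)) (Finset.card_le_card hB')
    have hmin : min ((A.filter (fun w => w x = 1)).card) W.card
        = min ((B.filter (fun w => w x = 1)).card) W.card := by
      exact congrArg Fin.val this
    rw [min_eq_left hcA, min_eq_left hcB] at hmin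
    exact hmin
  rw [Finset.card_powerset, Finset.card_univ, Fintype.card_fun, Fintype.card_coe,
    Fintype.card_fin] at hmain
  calc 2 ^ W.card ≤ (W.card + 1) ^ J.card := hmain
    _ ≤ (W.card + 1) ^ r := Nat.pow_le_pow_right (Nat.succ_le_succ (Nat.zero_le _)) hJcard
lemma numeric_bound {k r : ℕ} (h : 2 ^ k ≤ (k + 1) ^ r) :
    (k : ℝ) ≤ 6 * r * Real.log (r + 2) := by
  have hlogr : (0:ℝ) ≤ Real.log ((r:ℝ) + 2) :=
    Real.log_nonneg (by have := Nat.cast_nonneg (α := ℝ) r; linarith)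
  rcases Nat.eq_zero_or_pos r with rfl | hrpos
  · have hk0 : k = 0 := by
      by_contra hk
      have h2 : 2 ≤ 2 ^ k := by
        calc 2 = 2 ^ 1 := by norm_num
          _ ≤ 2 ^ k := Nat.pow_le_pow_right (by norm_num) (by omega)
      simp at h
      omega
    simp [hk0]
  · have hlog : (k:ℝ) * Real.log 2 ≤ (r:ℝ) * Real.log ((k:ℝ) + 1) := by
      have h2 : (2:ℝ) ^ k ≤ ((k:ℝ) + 1) ^ r := by exact_mod_cast h
      have h3 := Real.log_le_log (by positivity) h2
      rwa [Real.log_pow, Real.log_pow] at h3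
    have hlog2 : (0.6931471803 : ℝ) < Real.log 2 := Real.log_two_gt_d9
    by_cases hcase : k + 1 ≤ (r + 2) ^ 4
    · have hk1 : Real.log ((k:ℝ) + 1) ≤ 4 * Real.log ((r:ℝ) + 2) := by
        have hle : ((k:ℝ) + 1) ≤ ((r:ℝ) + 2) ^ 4 := by exact_mod_cast hcase
        calc Real.log ((k:ℝ) + 1) ≤ Real.log (((r:ℝ) + 2) ^ 4) :=
              Real.log_le_log (by positivity) hle
          _ = 4 * Real.log ((r:ℝ) + 2) := by rw [Real.log_pow]; norm_num
      have h1 : (k:ℝ) * Real.log 2 ≤ (r:ℝ) * (4 * Real.log ((r:ℝ) + 2)) :=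
        hlog.trans (mul_le_mul_of_nonneg_left hk1 (by positivity))
      nlinarith [mul_le_mul_of_nonneg_right (le_of_lt hlog2)
        (by positivity : (0:ℝ) ≤ (k:ℝ))]
    · exfalso
      push_neg at hcase
      have hu4 : ((r:ℝ) + 2) ^ 4 < (k:ℝ) + 1 := by exact_mod_cast hcase
      have hupos : (0:ℝ) < (k:ℝ) + 1 := by positivity
      have hsq : ((r:ℝ) + 2) ^ 2 ≤ Real.sqrt ((k:ℝ) + 1) := by
        rw [Real.le_sqrt (by positivity) (le_of_lt hupos)]
        calc (((r:ℝ) + 2) ^ 2) ^ 2 = ((r:ℝ) + 2) ^ 4 := by ring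
          _ ≤ (k:ℝ) + 1 := le_of_lt hu4
      have hlogu : Real.log ((k:ℝ) + 1) ≤ 2 * Real.sqrt ((k:ℝ) + 1) := by
        have hs : Real.log (Real.sqrt ((k:ℝ) + 1)) ≤ Real.sqrt ((k:ℝ) + 1) - 1 :=
          Real.log_le_sub_one_of_pos (Real.sqrt_pos.mpr hupos)
        have hls : Real.log ((k:ℝ) + 1) = 2 * Real.log (Real.sqrt ((k:ℝ) + 1)) := by
          rw [Real.log_sqrt (le_of_lt hupos)]; ring
        nlinarith [Real.sqrt_nonneg ((k:ℝ) + 1)]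
      have hr3 : 3 * (r:ℝ) ≤ ((r:ℝ) + 2) ^ 2 := by nlinarith [sq_nonneg ((r:ℝ) - 1)]
      have hkey : (r:ℝ) * Real.log ((k:ℝ) + 1) ≤ (2/3) * ((k:ℝ) + 1) := by
        have hsnn : (0:ℝ) ≤ Real.sqrt ((k:ℝ) + 1) := Real.sqrt_nonneg _
        have hlogunn : (0:ℝ) ≤ Real.log ((k:ℝ) + 1) :=
          Real.log_nonneg (by norm_num)
        calc (r:ℝ) * Real.log ((k:ℝ) + 1)
            ≤ (r:ℝ) * (2 * Real.sqrt ((k:ℝ) + 1)) :=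
              mul_le_mul_of_nonneg_left hlogu (by positivity)
          _ = (2/3) * ((3 * (r:ℝ)) * Real.sqrt ((k:ℝ) + 1)) := by ring
          _ ≤ (2/3) * ((((r:ℝ) + 2) ^ 2) * Real.sqrt ((k:ℝ) + 1)) := by nlinarith
          _ ≤ (2/3) * (Real.sqrt ((k:ℝ) + 1) * Real.sqrt ((k:ℝ) + 1)) := by nlinarith
          _ = (2/3) * ((k:ℝ) + 1) := by
              rw [Real.mul_self_sqrt (le_of_lt hupos)]
      have hk81 : (81:ℝ) ≤ (k:ℝ) := by
        have hk81n : 81 ≤ k := by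
          have h34 : 3 ^ 4 ≤ (r + 2) ^ 4 := Nat.pow_le_pow_left (by omega) 4
          omega
        exact_mod_cast hk81n
      have e1 : (k:ℝ) * Real.log 2 ≤ (2/3) * ((k:ℝ) + 1) := hlog.trans hkey
      nlinarith [mul_le_mul_of_nonneg_right (le_of_lt hlog2)
        (by positivity : (0:ℝ) ≤ (k:ℝ))]

lemma bound_mono {r' r : ℕ} (h : r' ≤ r) (m : ℕ) :
    (12 * (r':ℝ) * Real.log ((r':ℝ) + 2)) ^ m
      ≤ (12 * (r:ℝ) * Real.log ((r:ℝ) + 2)) ^ m := by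
  have hc : (r':ℝ) ≤ r := by exact_mod_cast h
  have hl' : (0:ℝ) ≤ Real.log ((r':ℝ) + 2) :=
    Real.log_nonneg (by have := Nat.cast_nonneg (α := ℝ) r'; linarith)
  have hll : Real.log ((r':ℝ) + 2) ≤ Real.log ((r:ℝ) + 2) :=
    Real.log_le_log (by positivity) (by linarith)
  apply pow_le_pow_left₀
  · positivity
  · nlinarith [Nat.cast_nonneg (α := ℝ) r']
lemma main_lemma : ∀ (m : ℕ) (n : Fin (m+1) → ℕ) (T : (∀ i, Fin (n i)) → ℝ),
    (∀ x, T x = 0 ∨ T x = 1) →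
    ∃ t : ℕ, SDecomp T t ∧
      (t : ℝ) ≤ (12 * (tensorRank T : ℝ) * Real.log ((tensorRank T : ℝ) + 2)) ^ m := by
  intro m
  induction m with
  | zero =>
      intro n T hT
      exact ⟨1, SDecomp_order_one T hT, by norm_num⟩
  | succ m ih =>
      intro n T hT
      classical
      obtain ⟨R, hR1, hRsum⟩ := tensorRank_spec T
      choose v hv using hR1
      set F : Fin (n (Fin.last (m+1))) → ((∀ i : Fin (m+1), Fin (n i.castSucc)) → ℝ) :=
        fun y => fun x' => T (Fin.snoc x' y) with hF
      set P : Fin (tensorRank T) → ((∀ i : Fin (m+1), Fin (n i.castSucc)) → ℝ) :=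
        fun kk => fun x' => ∏ i : Fin (m+1), v kk i.castSucc (x' i) with hP
      have hfib : ∀ y, F y = ∑ kk, v kk (Fin.last (m+1)) y • P kk := by
        intro y
        funext x'
        rw [Finset.sum_apply]
        show T (Fin.snoc x' y) = _
        have e := congrFun hRsum (Fin.snoc x' y)
        rw [Finset.sum_apply] at e
        rw [e]
        refine Finset.sum_congr rfl fun kk _ => ?_
        rw [hv kk (Fin.snoc x' y), Fin.prod_univ_castSucc]
        simp only [Fin.snoc_castSucc, Fin.snoc_last, Pi.smul_apply, smul_eq_mul]
        rw [mul_comm]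
      set Z : Finset ((∀ i : Fin (m+1), Fin (n i.castSucc)) → ℝ) :=
        Finset.image F Finset.univ with hZ
      obtain ⟨W, hWZ, hWdis, hWmax⟩ := exists_maximal_dissoc Z
      have hZ01 : ∀ z ∈ Z, ∀ x', z x' = 0 ∨ z x' = 1 := by
        intro z hz x'
        obtain ⟨y, _, rfl⟩ := Finset.mem_image.mp hz
        exact hT _
      have hZrank : ∀ z ∈ Z, tensorRank z ≤ tensorRank T := by
        intro z hz
        obtain ⟨y, _, rfl⟩ := Finset.mem_image.mp hz
        refine tensorRank_le _ (fun kk => fun x' => v kk (Fin.last (m+1)) y * P kk x') ?_ ?_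
        · intro kk
          exact IsRankOneTensor.smul _ ⟨fun i => v kk i.castSucc, fun x' => rfl⟩
        · exact hfib y
      have hfinrank : Module.finrank ℝ (Submodule.span ℝ (Set.range P)) ≤ tensorRank T := by
        have hfr := finrank_range_le_card (R := ℝ) P
        simpa [Set.finrank] using hfr
      have hWV : ∀ w ∈ W, w ∈ Submodule.span ℝ (Set.range P) := by
        intro w hw
        obtain ⟨y, _, rfl⟩ := Finset.mem_image.mp (hWZ hw)
        rw [hfib y]
        exact Submodule.sum_mem _ fun kk _ =>
          Submodule.smul_mem _ _ (Submodule.subset_span ⟨kk, rfl⟩)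
      have hcard := dissoc_card_bound W (fun w hw => hZ01 w (hWZ hw)) hWdis _ hWV hfinrank
      have hk6 : (W.card : ℝ) ≤ 6 * (tensorRank T : ℝ) * Real.log ((tensorRank T : ℝ) + 2) := numeric_bound hcard
      have hIH : ∀ z ∈ Z, ∃ t : ℕ, SDecomp z t ∧
          (t:ℝ) ≤ (12 * (tensorRank T : ℝ) * Real.log ((tensorRank T : ℝ) + 2)) ^ m := by
        intro z hz
        obtain ⟨t, h1, h2⟩ := ih _ z (hZ01 z hz)
        exact ⟨t, h1, h2.trans (bound_mono (hZrank z hz) m)⟩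
      choose! tf htf1 htf2 using hIH
      have hrep : ∀ y, ∃ κ : ((∀ i : Fin (m+1), Fin (n i.castSucc)) → ℝ) → ℝ,
          (∀ w, κ w = 1 ∨ κ w = 0 ∨ κ w = -1) ∧ F y = ∑ w ∈ W, κ w • w :=
        fun y => represent_dissoc hWZ hWdis hWmax (Finset.mem_image_of_mem F (Finset.mem_univ y))
      choose κ hκv hκs using hrep
      set G : ((∀ i : Fin (m+1), Fin (n i.castSucc)) → ℝ) → ((∀ i, Fin (n i)) → ℝ) :=
        fun w => fun x => κ (x (Fin.last (m+1))) w * w (Fin.init x) with hG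
      have hTG : T = ∑ w ∈ W, G w := by
        funext x
        rw [Finset.sum_apply]
        have h3 : F (x (Fin.last (m+1))) (Fin.init x) = T x := by
          show T (Fin.snoc (Fin.init x) (x (Fin.last (m+1)))) = T x
          exact congrArg T (Fin.snoc_init_self x)
        have h2 : F (x (Fin.last (m+1))) (Fin.init x) = ∑ w ∈ W, κ (x (Fin.last (m+1))) w * w (Fin.init x) := by
          rw [hκs (x (Fin.last (m+1))), Finset.sum_apply]
          exact Finset.sum_congr rfl fun w _ => rfl
        calc T x = F (x (Fin.last (m+1))) (Fin.init x) := h3.symm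
          _ = ∑ w ∈ W, κ (x (Fin.last (m+1))) w * w (Fin.init x) := h2
          _ = ∑ w ∈ W, G w x := rfl
      have hGdec : ∀ w ∈ W, SDecomp (G w) (tf w + tf w) := by
        intro w hw
        have hSw : SDecomp w (tf w) := htf1 w (hWZ hw)
        have hE1 : SDecomp
            (fun x : ∀ i, Fin (n i) =>
              w (Fin.init x) * (fun y => if κ y w = 1 then (1:ℝ) else 0) (x (Fin.last (m+1)))) (tf w) :=
          hSw.ext_last (fun y => if κ y w = 1 then (1:ℝ) else 0)
            (fun y => by by_cases h : κ y w = 1 <;> simp [h])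
        have hE2 : SDecomp
            (- fun x : ∀ i, Fin (n i) =>
              w (Fin.init x) * (fun y => if κ y w = -1 then (1:ℝ) else 0) (x (Fin.last (m+1)))) (tf w) :=
          (hSw.ext_last (fun y => if κ y w = -1 then (1:ℝ) else 0)
            (fun y => by by_cases h : κ y w = -1 <;> simp [h])).neg
        have hadd := hE1.add hE2
        have hGE : G w = (fun x : ∀ i, Fin (n i) =>
              w (Fin.init x) * (fun y => if κ y w = 1 then (1:ℝ) else 0) (x (Fin.last (m+1)))) +
            (- fun x : ∀ i, Fin (n i) =>
              w (Fin.init x) * (fun y => if κ y w = -1 then (1:ℝ) else 0) (x (Fin.last (m+1)))) := by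
          funext x
          simp only [Pi.add_apply, Pi.neg_apply]
          show κ (x (Fin.last (m+1))) w * w (Fin.init x) = _
          rcases hκv (x (Fin.last (m+1))) w with h | h | h <;> rw [h] <;> norm_num
        rw [hGE]
        exact hadd
      refine ⟨∑ w ∈ W, (tf w + tf w), ?_, ?_⟩
      · have hs := SDecomp.sum W G (fun w => tf w + tf w) hGdec
        rwa [← hTG] at hs
      · have hlogr : (0:ℝ) ≤ Real.log ((tensorRank T : ℝ) + 2) :=
          Real.log_nonneg (by have := Nat.cast_nonneg (α := ℝ) (tensorRank T); linarith)
        have hBnn : (0:ℝ) ≤ (12 * (tensorRank T : ℝ) * Real.log ((tensorRank T : ℝ) + 2)) ^ m :=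
          pow_nonneg (by positivity) m
        calc ((∑ w ∈ W, (tf w + tf w) : ℕ) : ℝ)
            = ∑ w ∈ W, ((tf w : ℝ) + (tf w : ℝ)) := by push_cast; rfl
          _ ≤ ∑ w ∈ W, 2 * (12 * (tensorRank T : ℝ) * Real.log ((tensorRank T : ℝ) + 2)) ^ m := by
              refine Finset.sum_le_sum fun w hw => ?_
              have := htf2 w (hWZ hw)
              linarith
          _ = (W.card : ℝ) * (2 * (12 * (tensorRank T : ℝ) * Real.log ((tensorRank T : ℝ) + 2)) ^ m) := by
              rw [Finset.sum_const, nsmul_eq_mul]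
          _ ≤ (6 * (tensorRank T : ℝ) * Real.log ((tensorRank T : ℝ) + 2))
                * (2 * (12 * (tensorRank T : ℝ) * Real.log ((tensorRank T : ℝ) + 2)) ^ m) := by
              refine mul_le_mul_of_nonneg_right hk6 (by positivity)
          _ = (12 * (tensorRank T : ℝ) * Real.log ((tensorRank T : ℝ) + 2))
                * (12 * (tensorRank T : ℝ) * Real.log ((tensorRank T : ℝ) + 2)) ^ m := by ring
          _ = (12 * (tensorRank T : ℝ) * Real.log ((tensorRank T : ℝ) + 2)) ^ (m + 1) := by
              rw [pow_succ]; ring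

/-- Every order-`ℓ` Boolean tensor of tensor rank `r` (`ℓ ≥ 2`) is a
`±1`-linear combination of at most `(c r log r)^(ℓ-1)` primitive tensors. -/
theorem tensor_signed_rectangle_rank_bound :
    ∃ c : ℝ, 0 < c ∧
      ∀ (l : ℕ), 2 ≤ l →
        ∀ (n : Fin l → ℕ) (T : (∀ i, Fin (n i)) → ℝ),
          (∀ x, T x = 0 ∨ T x = 1) →
          ∀ r : ℕ, tensorRank T = r →
            ∃ (t : ℕ) (ε : Fin t → ℝ) (R : Fin t → ((∀ i, Fin (n i)) → ℝ)),
              (t : ℝ) ≤ (c * (r : ℝ) * Real.log ((r : ℝ) + 2)) ^ (l - 1) ∧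
              (∀ i, ε i = 1 ∨ ε i = -1) ∧
              (∀ i, IsPrimitiveTensor (R i)) ∧
              T = ∑ i, ε i • R i := by
  refine ⟨12, by norm_num, ?_⟩
  intro l hl n T hT r hr
  obtain ⟨m, rfl⟩ : ∃ m, l = m + 1 := ⟨l - 1, by omega⟩
  obtain ⟨t, ⟨ε, R, hε, hR, hTsum⟩, hbound⟩ := main_lemma m n T hT
  refine ⟨t, ε, R, ?_, hε, hR, hTsum⟩
  rw [← hr]
  simpa using hbound
end

section
/- There exists an absolute constant C > 0 such that the following holds. Let T : Fin n₁ × ⋯ × Fin n_ℓ → ℝ be an order-ℓ Boolean tensor of tensor rank r, let λ ∈ {1,…,ℓ}, and let S be an independent set of λ-slices of T, i.e., a set of indices in Fin n_λ such that all subsets of S have pairwise distinct slice-sums. Then |S| ≤ C·r·log(r+2). -/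
/-- The slice-sum of a set `A ⊆ Fin (n lam)` of `lam`-slices of `T`:
the entrywise sum of the slices of `T` obtained by fixing the `lam`-th
coordinate to the values in `A`. -/
def sliceSum {l : ℕ} {n : Fin l → ℕ} (T : (∀ i, Fin (n i)) → ℝ)
    (lam : Fin l) (A : Finset (Fin (n lam))) : (∀ i, Fin (n i)) → ℝ :=
  fun x => ∑ j ∈ A, T (Function.update x lam j)

/-- A set `S` of `lam`-slices is independent if all subsets of `S` have
pairwise distinct slice-sums. -/
def IndepSlices {l : ℕ} {n : Fin l → ℕ} (T : (∀ i, Fin (n i)) → ℝ)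
    (lam : Fin l) (S : Finset (Fin (n lam))) : Prop :=
  ∀ A ⊆ S, ∀ B ⊆ S, sliceSum T lam A = sliceSum T lam B → A = B


open Module

theorem Submodule.exists_finset_card_le_finrank_injOn_restrict {K X : Type*} [Field K]
    (V : Submodule K (X → K)) [FiniteDimensional K V] :
    ∃ P : Finset X, P.card ≤ finrank K V ∧
      Set.InjOn (fun (f : X → K) (x : P) => f x) V := by
  classical
  let ev : X → Dual K V := fun x => (LinearMap.proj x).comp V.subtype
  obtain ⟨κ, a, -, hspan, hli⟩ := exists_linearIndependent' K ev
  have : Fintype κ := @Fintype.ofFinite κ hli.finite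
  refine ⟨Finset.univ.image a, ?_, fun f hf g hg hfg => ?_⟩
  · calc (Finset.univ.image a).card ≤ Fintype.card κ := Finset.card_image_le
      _ ≤ finrank K (Dual K V) := hli.fintype_card_le_finrank
      _ = finrank K V := Subspace.dual_finrank_eq
  -- every evaluation functional is a combination of those at points of `P`, all killing `f - g`
  have hker : Submodule.span K (Set.range ev) ≤
      LinearMap.ker (Dual.eval K V ⟨f - g, V.sub_mem hf hg⟩) := by
    rw [← hspan, Submodule.span_le]
    rintro _ ⟨k, rfl⟩
    have := congrFun hfg ⟨a k, Finset.mem_image_of_mem a (Finset.mem_univ k)⟩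
    simpa [ev, sub_eq_zero] using this
  funext x
  simpa [ev, sub_eq_zero] using hker (Submodule.subset_span ⟨x, rfl⟩)

theorem Submodule.card_le_card_pow_finrank {K X : Type*} [Field K]
    (V : Submodule K (X → K)) [FiniteDimensional K V] {F : Finset (X → K)} {W : Finset K}
    (hW : W.Nonempty) (hFV : ∀ f ∈ F, f ∈ V) (hFW : ∀ f ∈ F, ∀ x, f x ∈ W) :
    F.card ≤ W.card ^ finrank K V := by
  classical
  obtain ⟨P, hP, hinj⟩ := V.exists_finset_card_le_finrank_injOn_restrict
  calc F.card ≤ (Fintype.piFinset fun _ : P => W).card :=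
        Finset.card_le_card_of_injOn _ (fun f hf => Fintype.mem_piFinset.2 fun x => hFW f hf x)
          (fun f hf g hg => hinj (hFV f hf) (hFV g hg))
    _ = W.card ^ P.card := by simp
    _ ≤ W.card ^ finrank K V := Nat.pow_le_pow_right hW.card_pos hP

theorem isRankOneTensor_ite_eq {l : ℕ} {n : Fin l → ℕ} (x : ∀ i, Fin (n i)) :
    IsRankOneTensor fun y => if y = x then (1 : ℝ) else 0 :=
  ⟨fun i j => if j = x i then 1 else 0, fun y => by simp [Finset.prod_boole, funext_iff]⟩

theorem exists_rankOne_decomposition {l : ℕ} {n : Fin l → ℕ}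
    {T : (∀ i, Fin (n i)) → ℝ} (hT : ∀ x, T x = 0 ∨ T x = 1) :
    ∃ r, ∃ R : Fin r → ((∀ i, Fin (n i)) → ℝ),
      (∀ i, IsRankOneTensor (R i)) ∧ T = ∑ i, R i := by
  classical
  let s := Finset.univ.filter fun x => T x = 1
  refine ⟨s.card, fun k y => if y = s.equivFin.symm k then 1 else 0,
    fun k => isRankOneTensor_ite_eq _, funext fun y => ?_⟩
  rw [Finset.sum_apply, s.equivFin.symm.sum_comp (fun x => if y = (x : _) then (1 : ℝ) else 0),
    Finset.sum_coe_sort s fun x => if y = x then (1 : ℝ) else 0]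
  rcases hT y with h | h <;> simp [s, h]

theorem exists_rankOne_decomposition_tensorRank {l : ℕ} {n : Fin l → ℕ}
    {T : (∀ i, Fin (n i)) → ℝ} (hT : ∀ x, T x = 0 ∨ T x = 1) :
    ∃ R : Fin (tensorRank T) → ((∀ i, Fin (n i)) → ℝ),
      (∀ i, IsRankOneTensor (R i)) ∧ T = ∑ i, R i :=
  Nat.sInf_mem (exists_rankOne_decomposition hT)

theorem sliceSum_sum {l : ℕ} {n : Fin l → ℕ} {ι : Type*} (s : Finset ι)
    (R : ι → (∀ i, Fin (n i)) → ℝ) (lam : Fin l) (A : Finset (Fin (n lam))) :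
    sliceSum (∑ i ∈ s, R i) lam A = ∑ i ∈ s, sliceSum (R i) lam A := by
  funext x
  simp only [sliceSum, Finset.sum_apply]
  exact Finset.sum_comm

theorem IsRankOneTensor.exists_sliceSum_eq_smul {l : ℕ} {n : Fin l → ℕ}
    {R : (∀ i, Fin (n i)) → ℝ} (hR : IsRankOneTensor R) (lam : Fin l) :
    ∃ g : (∀ i, Fin (n i)) → ℝ, ∀ A, ∃ c : ℝ, sliceSum R lam A = c • g := by
  classical
  obtain ⟨v, hv⟩ := hR
  refine ⟨fun x => ∏ k ∈ Finset.univ.erase lam, v k (x k),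
    fun A => ⟨∑ j ∈ A, v lam j, ?_⟩⟩
  funext x
  simp only [sliceSum, hv, Pi.smul_apply, smul_eq_mul, Finset.sum_mul]
  refine Finset.sum_congr rfl fun j _ => ?_
  rw [← Finset.mul_prod_erase _ _ (Finset.mem_univ lam), Function.update_self]
  congr 1
  exact Finset.prod_congr rfl fun k hk => by
    rw [Function.update_of_ne (Finset.ne_of_mem_erase hk)]

theorem exists_sliceSum_mem_span {l : ℕ} {n : Fin l → ℕ} {r : ℕ}
    {R : Fin r → (∀ i, Fin (n i)) → ℝ} (hR : ∀ i, IsRankOneTensor (R i)) (lam : Fin l) :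
    ∃ g : Fin r → (∀ i, Fin (n i)) → ℝ,
      ∀ A, sliceSum (∑ i, R i) lam A ∈ Submodule.span ℝ (Set.range g) := by
  choose g c hc using fun i => (hR i).exists_sliceSum_eq_smul lam
  refine ⟨g, fun A => ?_⟩
  rw [sliceSum_sum]
  exact Submodule.sum_mem _ fun i _ =>
    hc i A ▸ Submodule.smul_mem _ _ (Submodule.subset_span ⟨i, rfl⟩)

theorem sliceSum_apply_eq_card_filter {l : ℕ} {n : Fin l → ℕ} {T : (∀ i, Fin (n i)) → ℝ}
    (hT : ∀ x, T x = 0 ∨ T x = 1) (lam : Fin l) (A : Finset (Fin (n lam)))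
    (x : ∀ i, Fin (n i)) :
    sliceSum T lam A x = (A.filter fun j => T (Function.update x lam j) = 1).card := by
  classical
  rw [sliceSum, ← Finset.sum_boole]
  refine Finset.sum_congr rfl fun j _ => ?_
  rcases hT (Function.update x lam j) with h | h <;> simp [h]

open Real in
theorem le_mul_log_of_two_pow_le_succ_pow {r s : ℕ} (h : 2 ^ s ≤ (s + 1) ^ r) :
    (s : ℝ) ≤ 5 * r * log (r + 2) := by
  rcases r.eq_zero_or_pos with rfl | hr
  · have : s = 0 := by
      have := s.lt_two_pow_self
      rw [pow_zero] at h
      omega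
    simp [this]
  have hr : (1 : ℝ) ≤ r := by exact_mod_cast hr
  have hcount : s * log 2 ≤ r * log (s + 1) := by
    have := log_le_log (by positivity)
      (show (2 : ℝ) ^ s ≤ ((s : ℝ) + 1) ^ r by exact_mod_cast h)
    rwa [log_pow, log_pow] at this
  -- `log y ≤ y / a - 1 + log a` with `a = 4 r`
  have htangent : r * log (s + 1) ≤ (s + 1) / 4 - r + r * log (4 * r) := by
    have := log_le_sub_one_of_pos (x := (s + 1) / (4 * r)) (by positivity)
    rw [log_div (by positivity) (by positivity)] at this
    have := mul_le_mul_of_nonneg_left this (by positivity : (0 : ℝ) ≤ r)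
    field_simp at this ⊢
    linarith
  have hlog4r : log (4 * r) ≤ 2 * log (r + 2) := by
    rw [← log_rpow (by positivity)]
    exact log_le_log (by positivity) (by norm_num; nlinarith)
  have hlog2 : 0.69 < log 2 := lt_trans (by norm_num) log_two_gt_d9
  have hlog4r_nonneg : 0 ≤ log (4 * r) := log_nonneg (by linarith)
  nlinarith

/-- Any independent set of `lam`-slices of a Boolean tensor of tensor rank `r`
has size at most `O(r log r)`. -/
theorem indep_slices_card_le :
    ∃ C : ℝ, 0 < C ∧
      ∀ (l : ℕ) (n : Fin l → ℕ) (T : (∀ i, Fin (n i)) → ℝ),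
        (∀ x, T x = 0 ∨ T x = 1) →
        ∀ r : ℕ, tensorRank T = r →
          ∀ (lam : Fin l) (S : Finset (Fin (n lam))),
            IndepSlices T lam S →
            (S.card : ℝ) ≤ C * (r : ℝ) * Real.log ((r : ℝ) + 2) := by
  refine ⟨5, by norm_num, ?_⟩
  rintro l n T hT r rfl lam S hS
  obtain ⟨R, hR, hTR⟩ := exists_rankOne_decomposition_tensorRank hT
  obtain ⟨g, hg⟩ := exists_sliceSum_mem_span hR lam
  rw [← hTR] at hg
  let V := Submodule.span ℝ (Set.range g)
  have : FiniteDimensional ℝ V := FiniteDimensional.span_of_finite ℝ (Set.finite_range g)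
  let W : Finset ℝ := (Finset.range (S.card + 1)).image Nat.cast
  have hW : ∀ A ∈ S.powerset, ∀ x, sliceSum T lam A x ∈ W := fun A hA x => by
    rw [sliceSum_apply_eq_card_filter hT]
    exact Finset.mem_image_of_mem _ (Finset.mem_range_succ_iff.2
      ((Finset.card_filter_le _ _).trans (Finset.card_le_card (Finset.mem_powerset.1 hA))))
  apply le_mul_log_of_two_pow_le_succ_pow
  calc 2 ^ S.card = (S.powerset.image (sliceSum T lam)).card := by
        rw [Finset.card_image_of_injOn fun A hA B hB => hS A (Finset.mem_powerset.1 hA) B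
          (Finset.mem_powerset.1 hB), Finset.card_powerset]
    _ ≤ W.card ^ finrank ℝ V := V.card_le_card_pow_finrank ⟨0, by simp [W]⟩
        (by simpa using fun A _ => hg A) (by simpa using hW)
    _ ≤ (S.card + 1) ^ tensorRank T := by
        gcongr
        · simp
        · exact Finset.card_image_le.trans (by simp)
        · simpa [Set.finrank] using finrank_range_le_card (R := ℝ) g
end

section
/- Let T : Fin n₁ × ⋯ × Fin n_ℓ → ℝ be an order-ℓ Boolean tensor, let λ ∈ {1,…,ℓ}, and let S ⊆ Fin n_λ be a maximal independent set of λ-slices of T. Then every λ-slice of T can be expressed as a linear combination of the λ-slices indexed by S with coefficients in {−1, 0, 1}; equivalently, for every j ∈ Fin n_λ there exist disjoint subsets A, B ⊆ S such that the λ-slice at j equals the slice-sum of A minus the slice-sum of B. -/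
lemma sliceSum_cancel {l : ℕ} {n : Fin l → ℕ} (T : (∀ i, Fin (n i)) → ℝ)
    (lam : Fin l) (C D : Finset (Fin (n lam))) (x : ∀ i, Fin (n i)) :
    sliceSum T lam C x - sliceSum T lam D x
      = sliceSum T lam (C \ D) x - sliceSum T lam (D \ C) x := by
  simp only [sliceSum]
  rw [← Finset.sdiff_inter_self_left C D, ← Finset.sdiff_inter_self_left D C,
    Finset.sum_sdiff_eq_sub Finset.inter_subset_left,
    Finset.sum_sdiff_eq_sub Finset.inter_subset_left, Finset.inter_comm D C]
  ring

/-- If `S` is a maximal independent set of `lam`-slices of a Boolean tensor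
`T`, then every `lam`-slice of `T` is a `±1`-linear combination of the slices
indexed by `S`: for every `j` there are disjoint `A, B ⊆ S` with
`slice at j = sliceSum A - sliceSum B`. -/
theorem maximal_indep_slices_spans {l : ℕ} {n : Fin l → ℕ}
    (T : (∀ i, Fin (n i)) → ℝ) (hT : ∀ x, T x = 0 ∨ T x = 1)
    (lam : Fin l) (S : Finset (Fin (n lam)))
    (hS : IndepSlices T lam S)
    (hmax : ∀ j : Fin (n lam), j ∉ S → ¬ IndepSlices T lam (insert j S)) :
    ∀ j : Fin (n lam), ∃ A B : Finset (Fin (n lam)),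
      A ⊆ S ∧ B ⊆ S ∧ Disjoint A B ∧
      ∀ x, T (Function.update x lam j) = sliceSum T lam A x - sliceSum T lam B x := by
  intro j
  by_cases hj : j ∈ S
  · exact ⟨{j}, ∅, Finset.singleton_subset_iff.mpr hj, Finset.empty_subset _,
      Finset.disjoint_empty_right _, fun x => by simp [sliceSum]⟩
  -- j ∉ S: use maximality
  have hni := hmax j hj
  simp only [IndepSlices, not_forall] at hni
  obtain ⟨A', hA', B', hB', hsum, hne⟩ := hni
  -- j belongs to exactly one of A', B'
  have key : ∀ C D : Finset (Fin (n lam)), C ⊆ insert j S → D ⊆ insert j S →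
      sliceSum T lam C = sliceSum T lam D → C ≠ D → j ∈ C → j ∉ D →
      ∃ A B : Finset (Fin (n lam)), A ⊆ S ∧ B ⊆ S ∧ Disjoint A B ∧
        ∀ x, T (Function.update x lam j)
          = sliceSum T lam A x - sliceSum T lam B x := by
    intro C D hC hD hsum hne hjC hjD
    refine ⟨D \ C, (C.erase j) \ D, ?_, ?_, ?_, ?_⟩
    · intro a ha
      have := hD (Finset.mem_sdiff.mp ha).1
      rcases Finset.mem_insert.mp this with h | h
      · exact absurd (h ▸ (Finset.mem_sdiff.mp ha).1) hjD
      · exact h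
    · intro a ha
      have ha' := Finset.mem_sdiff.mp ha
      have := hC (Finset.mem_erase.mp ha'.1).2
      rcases Finset.mem_insert.mp this with h | h
      · exact absurd h (Finset.mem_erase.mp ha'.1).1
      · exact h
    · rw [Finset.disjoint_left]
      intro a ha hb
      exact (Finset.mem_sdiff.mp hb).2 (Finset.mem_sdiff.mp ha).1
    · intro x
      have hsplit : sliceSum T lam C x
          = T (Function.update x lam j) + sliceSum T lam (C.erase j) x := by
        simp only [sliceSum]
        exact (Finset.add_sum_erase _ _ hjC).symm
      have hDC : D \ C = D \ C.erase j := by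
        ext a
        simp only [Finset.mem_sdiff, Finset.mem_erase]
        constructor
        · rintro ⟨h1, h2⟩
          exact ⟨h1, fun h3 => h2 h3.2⟩
        · rintro ⟨h1, h2⟩
          refine ⟨h1, fun h3 => ?_⟩
          rcases eq_or_ne a j with rfl | hne'
          · exact hjD h1
          · exact h2 ⟨hne', h3⟩
      have := congrFun hsum x
      rw [hsplit] at this
      have : T (Function.update x lam j)
          = sliceSum T lam D x - sliceSum T lam (C.erase j) x := by linarith
      rw [this, sliceSum_cancel, hDC]
  have subS : ∀ C : Finset (Fin (n lam)), C ⊆ insert j S → j ∉ C → C ⊆ S := by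
    intro C hC hjC a ha
    exact (Finset.mem_insert.mp (hC ha)).resolve_left (fun he => hjC (he ▸ ha))
  by_cases hjA : j ∈ A' <;> by_cases hjB : j ∈ B'
  · -- j in both: erase j from each, contradiction with hS
    exfalso
    have hAe : A'.erase j ⊆ S := subS _ ((Finset.erase_subset _ _).trans hA')
      (Finset.notMem_erase _ _)
    have hBe : B'.erase j ⊆ S := subS _ ((Finset.erase_subset _ _).trans hB')
      (Finset.notMem_erase _ _)
    have heq : sliceSum T lam (A'.erase j) = sliceSum T lam (B'.erase j) := by
      funext x
      have h1 := (Finset.add_sum_erase A' (fun k => T (Function.update x lam k)) hjA).symm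
      have h2 := (Finset.add_sum_erase B' (fun k => T (Function.update x lam k)) hjB).symm
      have h3 := congrFun hsum x
      simp only [sliceSum] at h1 h2 h3 ⊢
      rw [h1, h2] at h3
      linarith
    have := hS _ hAe _ hBe heq
    apply hne
    rw [← Finset.insert_erase hjA, ← Finset.insert_erase hjB, this]
  · exact key A' B' hA' hB' hsum hne hjA hjB
  · exact key B' A' hB' hA' hsum.symm (fun h => hne h.symm) hjB hjA
  · exact absurd (hS A' (subS _ hA' hjA) B' (subS _ hB' hjB) hsum) hne
end

section
/- For all integers r ≥ 2 and ℓ ≥ 2, there exists an order-ℓ Boolean tensor T : (Fin r)^ℓ → {0,1} such that any representation T = Σ_{i=1}^t ε_i R_i with ε_i ∈ {1,−1} and R_i primitive tensors requires t ≥ r^{ℓ−1}/(4ℓ). -/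
/-- A primitive tensor on `(Fin r)^ℓ`: a product of `{0,1}`-valued factors. -/
def IsPrimitiveCubeTensor {l r : ℕ} (R : (Fin l → Fin r) → ℝ) : Prop :=
  ∃ v : Fin l → Fin r → ℝ,
    (∀ i x, v i x = 0 ∨ v i x = 1) ∧ ∀ x, R x = ∏ i, v i (x i)

set_option maxHeartbeats 1000000 in
/-- For all `r, ℓ ≥ 2` there is an order-`ℓ` Boolean tensor on `(Fin r)^ℓ`
such that any signed decomposition into primitive tensors requires at least
`r^(ℓ-1) / (4ℓ)` terms. -/
theorem tensor_signed_rank_lower_bound :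
    ∀ r : ℕ, 2 ≤ r → ∀ l : ℕ, 2 ≤ l →
      ∃ T : (Fin l → Fin r) → ℝ,
        (∀ x, T x = 0 ∨ T x = 1) ∧
        ∀ (t : ℕ) (ε : Fin t → ℝ) (R : Fin t → ((Fin l → Fin r) → ℝ)),
          (∀ i, ε i = 1 ∨ ε i = -1) →
          (∀ i, IsPrimitiveCubeTensor (R i)) →
          T = ∑ i, ε i • R i →
          ((r : ℝ) ^ (l - 1) / (4 * (l : ℝ))) ≤ (t : ℝ) := by
  intro r hr l hl
  by_contra hcon
  push_neg at hcon
  have hl1 : 1 ≤ l := le_trans one_le_two hl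
  have hrR : (0:ℝ) < r := by positivity
  have hrR2 : (2:ℝ) ≤ r := by exact_mod_cast hr
  have hlR2 : (2:ℝ) ≤ l := by exact_mod_cast hl
  have hlR : (0:ℝ) < l := by linarith
  set B : ℝ := (r:ℝ) ^ (l-1) / (4 * l) with hBdef
  have hBpos : 0 < B := by
    apply div_pos
    · positivity
    · positivity
  set t₀ : ℕ := ⌊B⌋₊ with ht₀def
  have hj0 : 0 < l := by omega
  let j0 : Fin l := ⟨0, hj0⟩
  -- every Boolean tensor has a short decomposition; encode it
  have key : ∀ f : (Fin l → Fin r) → Bool,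
      ∃ e : Fin t₀ → Bool × (Fin l → Fin r → Bool),
        ∀ x, (if f x then (1:ℝ) else 0) =
          ∑ k : Fin t₀, (if (e k).1 then (1:ℝ) else -1) *
            ∏ j, (if (e k).2 j (x j) then (1:ℝ) else 0) := by
    intro f
    obtain ⟨t, ε, R, hε, hR, hsum, ht⟩ :=
      hcon (fun x => if f x then 1 else 0)
        (fun x => by by_cases h : f x <;> simp [h])
    choose v hv01 hvR using hR
    have htle : t ≤ t₀ := Nat.le_floor ht.le
    set ε' : ℕ → ℝ := fun n => if h : n < t then ε ⟨n, h⟩ else 1 with hε'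
    set v' : ℕ → Fin l → Fin r → ℝ :=
      fun n => if h : n < t then v ⟨n, h⟩ else fun _ _ => 0 with hv'
    refine ⟨fun k => (decide (ε' k = 1), fun j y => decide (v' k j y = 1)), ?_⟩
    intro x
    have hterm : ∀ k : ℕ,
        (if decide (ε' k = 1) = true then (1:ℝ) else -1) *
          ∏ j, (if decide (v' k j (x j) = 1) = true then (1:ℝ) else 0)
        = ε' k * ∏ j, v' k j (x j) := by
      intro k
      by_cases hk : k < t
      · have hde : ε' k = ε ⟨k, hk⟩ := dif_pos hk
        have hdv : v' k = v ⟨k, hk⟩ := dif_pos hk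
        have h1 : (if decide (ε' k = 1) = true then (1:ℝ) else -1) = ε' k := by
          rcases hε ⟨k, hk⟩ with h | h
          · simp [hde, h]
          · rw [hde, h]; norm_num
        have h2 : ∀ j, (if decide (v' k j (x j) = 1) = true then (1:ℝ) else 0)
            = v' k j (x j) := by
          intro j
          rcases hv01 ⟨k, hk⟩ j (x j) with h | h
          · rw [hdv, h]; norm_num
          · simp [hdv, h]
        rw [h1]
        congr 1
        exact Finset.prod_congr rfl (fun j _ => h2 j)
      · have hz : ∏ j : Fin l, (0:ℝ) = 0 :=
          Finset.prod_eq_zero (Finset.mem_univ j0) rfl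
        simp [hε', hv', hk, hz]
    have hzero : ∀ k, ¬ k < t → ε' k * ∏ j, v' k j (x j) = 0 := by
      intro k hk
      have hz : ∏ j : Fin l, (0:ℝ) = 0 :=
        Finset.prod_eq_zero (Finset.mem_univ j0) rfl
      simp [hε', hv', hk, hz]
    calc (if f x then (1:ℝ) else 0)
        = ∑ i : Fin t, ε i • R i x := by
          have := congrFun hsum x
          simpa using this
      _ = ∑ i : Fin t, ε' (i : ℕ) * ∏ j, v' (i : ℕ) j (x j) := by
          refine Finset.sum_congr rfl (fun i _ => ?_)
          simp [hε', hv', i.isLt, hvR i x, smul_eq_mul]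
      _ = ∑ k ∈ Finset.range t, ε' k * ∏ j, v' k j (x j) :=
          Fin.sum_univ_eq_sum_range (fun n => ε' n * ∏ j, v' n j (x j)) t
      _ = ∑ k ∈ Finset.range t₀, ε' k * ∏ j, v' k j (x j) :=
          Finset.sum_subset (Finset.range_subset_range.2 htle)
            (fun k _ hk => hzero k (by simpa using hk))
      _ = ∑ k : Fin t₀, ε' (k : ℕ) * ∏ j, v' (k : ℕ) j (x j) :=
          (Fin.sum_univ_eq_sum_range (fun n => ε' n * ∏ j, v' n j (x j)) t₀).symm
      _ = ∑ k : Fin t₀, (if decide (ε' (k:ℕ) = 1) = true then (1:ℝ) else -1) *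
            ∏ j, (if decide (v' (k:ℕ) j (x j) = 1) = true then (1:ℝ) else 0) :=
          Finset.sum_congr rfl (fun k _ => (hterm k).symm)
  choose e he using key
  have hinj : Function.Injective e := by
    intro f g hfg
    funext x
    have h1 : (if f x then (1:ℝ) else 0) = (if g x then 1 else 0) := by
      rw [he f x, he g x, hfg]
    by_cases hf : f x <;> by_cases hg : g x <;> simp_all
  have hcard := Fintype.card_le_of_injective e hinj
  have hcL : Fintype.card ((Fin l → Fin r) → Bool) = 2 ^ (r ^ l) := by
    rw [Fintype.card_fun, Fintype.card_bool, Fintype.card_fun,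
      Fintype.card_fin, Fintype.card_fin]
  have hcR : Fintype.card (Fin t₀ → Bool × (Fin l → Fin r → Bool))
      = 2 ^ ((r * l + 1) * t₀) := by
    rw [Fintype.card_fun, Fintype.card_prod, Fintype.card_fun, Fintype.card_fun,
      Fintype.card_bool, Fintype.card_fin, Fintype.card_fin, Fintype.card_fin,
      ← pow_mul, ← pow_succ', ← pow_mul]
  rw [hcL, hcR] at hcard
  have hexp : r ^ l ≤ (r * l + 1) * t₀ :=
    (Nat.pow_le_pow_iff_right (by norm_num : 1 < 2)).mp hcard
  -- but (r*l+1) * t₀ < r^l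
  have hfloor : (t₀:ℝ) ≤ B := Nat.floor_le hBpos.le
  have h1 : ((r:ℝ) * l + 1) * t₀ ≤ ((r:ℝ) * l + 1) * B := by
    apply mul_le_mul_of_nonneg_left hfloor
    positivity
  have h2 : ((r:ℝ) * l + 1) * B < (4 * l * r) * B := by
    apply mul_lt_mul_of_pos_right _ hBpos
    have h4 : (2:ℝ) * 2 ≤ r * l :=
      mul_le_mul hrR2 hlR2 (by norm_num) (by linarith)
    nlinarith [h4]
  have h3 : (4 * (l:ℝ) * r) * B = (r:ℝ) ^ l := by
    rw [hBdef]
    have h4l : (4:ℝ) * l ≠ 0 := by positivity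
    field_simp
    rw [show (r:ℝ) ^ l = (r:ℝ) ^ (l-1) * r from by rw [← pow_succ]; congr 1; omega]
    ring
  have hlt : ((r:ℝ) * l + 1) * t₀ < (r:ℝ) ^ l := by
    calc ((r:ℝ) * l + 1) * t₀ ≤ ((r:ℝ) * l + 1) * B := h1
      _ < (4 * l * r) * B := h2
      _ = (r:ℝ) ^ l := h3
  have hge : ((r:ℝ) ^ l : ℝ) ≤ ((r:ℝ) * l + 1) * t₀ := by
    have := hexp
    push_cast
    exact_mod_cast Nat.cast_le.mpr this
  linarith
end

section
/- Suppose there exist constants C > 0 and k ≥ 1 such that every Boolean matrix B has a monochromatic rectangle of density at least 2^{−C·(log₂(rank(B)+2))^k}. Then there exist constants C' > 0 and k' ≥ 1 such that for every d ≥ 1, all a, b ∈ {0,…,d} with a ≤ b, and every {a,b}-cross-intersecting pair of indexed families S : Fin m → Finset(Fin d), T : Fin n → Finset(Fin d) (with m,n ≥ 1), there exist nonempty index sets A ⊆ Fin m and B ⊆ Fin n such that |S_i ∩ T_j| is the same value (either a or b) for all i ∈ A, j ∈ B, and |A|·|B| ≥ 2^{−C'·(log₂(d+2))^{k'}} ·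 m·n. -/
/-- `M` has a monochromatic rectangle of density at least `δ`. -/
def HasMonoRectangle {m n : ℕ} (M : Matrix (Fin m) (Fin n) ℝ) (δ : ℝ) : Prop :=
  ∃ (I : Finset (Fin m)) (J : Finset (Fin n)),
    I.Nonempty ∧ J.Nonempty ∧
    (∃ c : ℝ, ∀ i ∈ I, ∀ j ∈ J, M i j = c) ∧
    δ * ((m : ℝ) * (n : ℝ)) ≤ (I.card : ℝ) * (J.card : ℝ)

/-- The pair of indexed families `(S, T)` is `L`-cross-intersecting. -/
def CrossIntersecting {m n d : ℕ} (S : Fin m → Finset (Fin d))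
    (T : Fin n → Finset (Fin d)) (L : Set ℕ) : Prop :=
  ∀ i j, (S i ∩ T j).card ∈ L

/-- The Nisan–Wigderson formulation of the log-rank conjecture implies the
conjecture on `{a,b}`-cross-intersecting set systems. -/
theorem nw_implies_cross_intersecting
    (hNW : ∃ C : ℝ, 0 < C ∧ ∃ k : ℕ, 1 ≤ k ∧
      ∀ (m n : ℕ), 1 ≤ m → 1 ≤ n →
        ∀ B : Matrix (Fin m) (Fin n) ℝ,
        (∀ i j, B i j = 0 ∨ B i j = 1) →
        HasMonoRectangle B
          ((2 : ℝ) ^ (-(C * (Real.logb 2 ((B.rank : ℝ) + 2)) ^ k)))) :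
    ∃ C' : ℝ, 0 < C' ∧ ∃ k' : ℕ, 1 ≤ k' ∧
      ∀ d : ℕ, 1 ≤ d → ∀ a b : ℕ, a ≤ d → b ≤ d → a ≤ b →
        ∀ (m n : ℕ), 1 ≤ m → 1 ≤ n →
          ∀ (S : Fin m → Finset (Fin d)) (T : Fin n → Finset (Fin d)),
            CrossIntersecting S T {a, b} →
            ∃ (A : Finset (Fin m)) (B : Finset (Fin n)),
              A.Nonempty ∧ B.Nonempty ∧
              ((∀ i ∈ A, ∀ j ∈ B, (S i ∩ T j).card = a) ∨
               (∀ i ∈ A, ∀ j ∈ B, (S i ∩ T j).card = b)) ∧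
              (2 : ℝ) ^ (-(C' * (Real.logb 2 ((d : ℝ) + 2)) ^ k')) *
                  ((m : ℝ) * (n : ℝ)) ≤
                (A.card : ℝ) * (B.card : ℝ) := by
  simp only [HasMonoRectangle] at hNW
  simp only [CrossIntersecting]
  obtain ⟨C, hC, k, hk, hmain⟩ := hNW
  refine ⟨C * 2 ^ k, by positivity, k, hk, ?_⟩
  intro d hd a b had hbd hab m n hm hn S T hcross
  -- the constant
  set c : ℝ := ((b : ℝ) - (a : ℝ))⁻¹ with hc
  -- the Boolean matrix as a product of two small matrices
  set P : Matrix (Fin m) (Fin (d + 1)) ℝ := fun i x =>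
    if h : (x : ℕ) < d then (if (⟨x, h⟩ : Fin d) ∈ S i then -c else 0) else c * b with hP
  set Q : Matrix (Fin (d + 1)) (Fin n) ℝ := fun x j =>
    if h : (x : ℕ) < d then (if (⟨x, h⟩ : Fin d) ∈ T j then 1 else 0) else 1 with hQ
  set M : Matrix (Fin m) (Fin n) ℝ := P * Q with hM
  have sum_ind : ∀ (A : Finset (Fin d)) (r : ℝ),
      (∑ x : Fin d, (if x ∈ A then r else 0)) = (A.card : ℝ) * r := by
    intro A r
    rw [Finset.sum_ite_mem, Finset.univ_inter, Finset.sum_const, nsmul_eq_mul]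
  have hMval : ∀ i j, M i j = c * ((b : ℝ) - ((S i ∩ T j).card : ℝ)) := by
    intro i j
    have : M i j = ∑ x : Fin (d + 1), P i x * Q x j := rfl
    rw [this, Fin.sum_univ_castSucc]
    have hlast : P i (Fin.last d) * Q (Fin.last d) j = c * b := by
      simp [hP, hQ]
    have hcs : ∀ x : Fin d, P i x.castSucc * Q x.castSucc j
        = (if x ∈ S i ∩ T j then -c else 0) := by
      intro x
      have hx : ((x.castSucc : Fin (d + 1)) : ℕ) < d := x.isLt
      simp only [hP, hQ, dif_pos hx]
      by_cases h1 : x ∈ S i <;> by_cases h2 : x ∈ T j <;>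
        simp [h1, h2, Finset.mem_inter]
    rw [Finset.sum_congr rfl fun x _ => hcs x, sum_ind, hlast]
    ring
  have hbool : ∀ i j, M i j = 0 ∨ M i j = 1 := by
    intro i j
    rcases hcross i j with h | h
    · rcases eq_or_lt_of_le hab with hab' | hab'
      · left
        rw [hMval, h, hab']
        ring
      · right
        rw [hMval, h]
        have hba : (b : ℝ) - (a : ℝ) ≠ 0 := by
          have : (a : ℝ) < b := by exact_mod_cast hab'
          linarith
        rw [hc]
        field_simp
    · left
      rw [hMval, h]
      ring
  obtain ⟨I, J, hI, hJ, ⟨cc, hcc⟩, hdens⟩ := hmain m n hm hn M hbool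
  refine ⟨I, J, hI, hJ, ?_, ?_⟩
  · obtain ⟨i₀, hi₀⟩ := hI
    obtain ⟨j₀, hj₀⟩ := hJ
    have hcc01 : cc = 0 ∨ cc = 1 := by
      rw [← hcc i₀ hi₀ j₀ hj₀]; exact hbool i₀ j₀
    rcases hcc01 with h0 | h1
    · right
      intro i hi j hj
      rcases hcross i j with h | h
      · rcases eq_or_lt_of_le hab with hab' | hab'
        · rw [h, hab']
        · exfalso
          have h1 : M i j = 1 := by
            rw [hMval, h]
            have hba : (b : ℝ) - (a : ℝ) ≠ 0 := by
              have : (a : ℝ) < b := by exact_mod_cast hab'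
              linarith
            rw [hc]; field_simp
          rw [hcc i hi j hj, h0] at h1
          norm_num at h1
      · exact h
    · left
      intro i hi j hj
      rcases hcross i j with h | h
      · exact h
      · rcases eq_or_lt_of_le hab with hab' | hab'
        · rw [h, hab']
        · exfalso
          have h0 : M i j = 0 := by rw [hMval, h]; ring
          rw [hcc i hi j hj, h1] at h0
          norm_num at h0
  · refine le_trans (mul_le_mul_of_nonneg_right ?_ (by positivity)) hdens
    apply Real.rpow_le_rpow_of_exponent_le one_le_two
    rw [neg_le_neg_iff]
    have hrank : (M.rank : ℝ) ≤ (d : ℝ) + 1 := by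
      have := (Matrix.rank_mul_le_left P Q).trans (Matrix.rank_le_card_width P)
      have : M.rank ≤ d + 1 := by simpa using this
      exact_mod_cast this
    have hL0 : (0:ℝ) ≤ Real.logb 2 ((M.rank : ℝ) + 2) := by
      apply Real.logb_nonneg one_lt_two
      have : (0:ℝ) ≤ (M.rank : ℝ) := Nat.cast_nonneg _
      linarith
    have hLle : Real.logb 2 ((M.rank : ℝ) + 2) ≤ 2 * Real.logb 2 ((d : ℝ) + 2) := by
      have h1 : Real.logb 2 ((M.rank : ℝ) + 2) ≤ Real.logb 2 (((d : ℝ) + 2) ^ 2) := by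
        apply Real.logb_le_logb_of_le one_lt_two (by positivity)
        have hd1 : (1:ℝ) ≤ d := by exact_mod_cast hd
        nlinarith
      rwa [Real.logb_pow, Nat.cast_ofNat] at h1
    calc C * Real.logb 2 ((M.rank : ℝ) + 2) ^ k
        ≤ C * (2 * Real.logb 2 ((d : ℝ) + 2)) ^ k := by
          apply mul_le_mul_of_nonneg_left _ hC.le
          exact pow_le_pow_left₀ hL0 hLle k
      _ = C * 2 ^ k * Real.logb 2 ((d : ℝ) + 2) ^ k := by rw [mul_pow]; ring
end

section
/- Suppose there exist constants C > 0 and k ≥ 1 such that for every d ≥ 1, all a, b ∈ {0,…,d}, and every {a,b}-cross-intersecting pair of indexed families S : Fin m → Finset(Fin d), T : Fin n → Finset(Fin d) (with m,n ≥ 1), there exist nonempty index sets A ⊆ Fin m and B ⊆ Fin n with |S_i ∩ T_j| constant (equal to a or to b) for all i ∈ A, j ∈ B, and |A|·|B| ≥ 2^{−C·(log₂(d+2))^k} · m·n. Then there exist constants C' > 0 and k' ≥ 1 such that every m×n Boolean matrix M (with m,n ≥ 1) with signed rectangle rank u = ur(M) has a monochromatic rectangle of density at least 2^{−C'·(log₂(u+2))^{k'}}.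 -/
/-- The signed rectangle rank of `M`. -/
noncomputable def urank {m n : ℕ} (M : Matrix (Fin m) (Fin n) ℝ) : ℕ :=
  sInf {t | ∃ (ε : Fin t → ℝ) (R : Fin t → Matrix (Fin m) (Fin n) ℝ),
    (∀ i, ε i = 1 ∨ ε i = -1) ∧ (∀ i, IsPrimitive (R i)) ∧ M = ∑ i, ε i • R i}

open scoped Classical in
noncomputable def Sfam {u m : ℕ} (ε : Fin u → ℝ) (x : Fin u → Fin m → ℝ) (i : Fin m) :
    Finset (Fin (u * 3)) :=
  (Finset.univ.filter (fun z : Fin u × Fin 3 =>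
    (z.2 = 0 ∧ ε z.1 = 1 ∧ x z.1 i = 1) ∨ (z.2 = 1 ∧ ε z.1 = -1 ∧ x z.1 i = 0) ∨
    (z.2 = 2 ∧ ε z.1 = -1 ∧ x z.1 i = 1))).map finProdFinEquiv.toEmbedding

open scoped Classical in
noncomputable def Tfam {u n : ℕ} (ε : Fin u → ℝ) (y : Fin u → Fin n → ℝ) (j : Fin n) :
    Finset (Fin (u * 3)) :=
  (Finset.univ.filter (fun z : Fin u × Fin 3 =>
    (z.2 = 0 ∧ ε z.1 = 1 ∧ y z.1 j = 1) ∨ (z.2 = 1 ∧ ε z.1 = -1) ∨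
    (z.2 = 2 ∧ ε z.1 = -1 ∧ y z.1 j = 0))).map finProdFinEquiv.toEmbedding

open scoped Classical in
lemma aux_card {u m n : ℕ} (ε : Fin u → ℝ) (x : Fin u → Fin m → ℝ) (y : Fin u → Fin n → ℝ)
    (hε : ∀ t, ε t = 1 ∨ ε t = -1) (hx : ∀ t i, x t i = 0 ∨ x t i = 1)
    (hy : ∀ t j, y t j = 0 ∨ y t j = 1) (i : Fin m) (j : Fin n) :
    ((Sfam ε x i ∩ Tfam ε y j).card : ℝ)
      = ((Finset.univ.filter (fun t => ε t = -1)).card : ℝ) + ∑ t, ε t * (x t i * y t j) := by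
  rw [Sfam, Tfam, ← Finset.map_inter, Finset.card_map, ← Finset.filter_and,
    Finset.card_filter, Finset.card_filter]
  push_cast
  rw [Fintype.sum_prod_type, ← Finset.sum_add_distrib]
  refine Finset.sum_congr rfl fun t _ => ?_
  rw [Fin.sum_univ_three]
  rcases hε t with h1 | h1 <;> rcases hx t i with h2 | h2 <;> rcases hy t j with h3 | h3 <;>
    norm_num [h1, h2, h3, show (0:Fin 3) ≠ 2 from by decide, show (1:Fin 3) ≠ 2 from by decide,
      show (2:Fin 3) ≠ 1 from by decide, show (2:Fin 3) ≠ 0 from by decide,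
      show (0:Fin 3) ≠ 1 from by decide, show (1:Fin 3) ≠ 0 from by decide]

/-- The cross-intersecting set systems conjecture implies that every Boolean
matrix has a monochromatic rectangle of density quasi-polynomially related to
its signed rectangle rank. -/
theorem cross_intersecting_implies_mono_rectangle
    (hCIS : ∃ C : ℝ, 0 < C ∧ ∃ k : ℕ, 1 ≤ k ∧
      ∀ d : ℕ, 1 ≤ d → ∀ a b : ℕ, a ≤ d → b ≤ d →
        ∀ (m n : ℕ), 1 ≤ m → 1 ≤ n →
          ∀ (S : Fin m → Finset (Fin d)) (T : Fin n → Finset (Fin d)),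
            CrossIntersecting S T {a, b} →
            ∃ (A : Finset (Fin m)) (B : Finset (Fin n)),
              A.Nonempty ∧ B.Nonempty ∧
              ((∀ i ∈ A, ∀ j ∈ B, (S i ∩ T j).card = a) ∨
               (∀ i ∈ A, ∀ j ∈ B, (S i ∩ T j).card = b)) ∧
              (2 : ℝ) ^ (-(C * (Real.logb 2 ((d : ℝ) + 2)) ^ k)) *
                  ((m : ℝ) * (n : ℝ)) ≤
                (A.card : ℝ) * (B.card : ℝ)) :
    ∃ C' : ℝ, 0 < C' ∧ ∃ k' : ℕ, 1 ≤ k' ∧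
      ∀ (m n : ℕ), 1 ≤ m → 1 ≤ n →
        ∀ M : Matrix (Fin m) (Fin n) ℝ,
          (∀ i j, M i j = 0 ∨ M i j = 1) →
          HasMonoRectangle M
            ((2 : ℝ) ^ (-(C' * (Real.logb 2 ((urank M : ℝ) + 2)) ^ k'))) := by
  classical
  obtain ⟨C, hC, k, hk, H⟩ := hCIS
  refine ⟨C * 2 ^ k, by positivity, k, hk, ?_⟩
  intro m n hm hn M hM
  have hmem : m ∈ {t | ∃ (ε : Fin t → ℝ) (R : Fin t → Matrix (Fin m) (Fin n) ℝ),
      (∀ i, ε i = 1 ∨ ε i = -1) ∧ (∀ i, IsPrimitive (R i)) ∧ M = ∑ i, ε i • R i} := by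
    refine ⟨fun _ => 1, fun i => Matrix.of fun a b => (if a = i then (1:ℝ) else 0) * M i b,
      fun _ => Or.inl rfl,
      fun i => ⟨fun a => if a = i then 1 else 0, fun b => M i b,
        fun a => by dsimp only; split <;> simp, hM i, fun a b => rfl⟩, ?_⟩
    ext a b
    simp [Matrix.sum_apply, ite_mul]
  have hdec : urank M ∈ {t | ∃ (ε : Fin t → ℝ) (R : Fin t → Matrix (Fin m) (Fin n) ℝ),
      (∀ i, ε i = 1 ∨ ε i = -1) ∧ (∀ i, IsPrimitive (R i)) ∧ M = ∑ i, ε i • R i} :=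
    Nat.sInf_mem ⟨m, hmem⟩
  obtain ⟨ε, R, hε, hR, hsum⟩ := hdec
  have hmn : (0:ℝ) ≤ (m:ℝ) * n := by positivity
  by_cases hu : urank M = 0
  · haveI : IsEmpty (Fin (urank M)) := by rw [hu]; infer_instance
    have hM0 : ∀ i j, M i j = 0 := by
      intro i j; rw [hsum]; simp [Matrix.sum_apply]
    refine ⟨Finset.univ, Finset.univ, ⟨⟨0, hm⟩, Finset.mem_univ _⟩,
      ⟨⟨0, hn⟩, Finset.mem_univ _⟩, ⟨0, fun i _ j _ => hM0 i j⟩, ?_⟩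
    rw [hu]
    simp only [Nat.cast_zero, zero_add, Real.logb_self_eq_one one_lt_two, one_pow, mul_one,
      Finset.card_univ, Fintype.card_fin]
    calc (2:ℝ) ^ (-(C * 2 ^ k)) * ((m:ℝ) * n) ≤ 1 * ((m:ℝ) * n) := by
          refine mul_le_mul_of_nonneg_right ?_ hmn
          exact Real.rpow_le_one_of_one_le_of_nonpos one_le_two
            (neg_nonpos.mpr (by positivity))
      _ = (m:ℝ) * n := one_mul _
  · have hu1 : 1 ≤ urank M := Nat.one_le_iff_ne_zero.mpr hu
    choose x y hx hy hRxy using hR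
    set N : Finset (Fin (urank M)) := Finset.univ.filter (fun t => ε t = -1) with hN
    have haN : N.card ≤ urank M := by
      calc N.card ≤ (Finset.univ : Finset (Fin (urank M))).card := Finset.card_filter_le _ _
        _ = urank M := by simp
    have hMsum : ∀ i j, M i j = ∑ t, ε t * (x t i * y t j) := by
      intro i j
      have h0 := congrFun (congrFun hsum i) j
      rw [h0]
      simp [Matrix.sum_apply, hRxy]
    have hcard : ∀ i j, ((Sfam ε x i ∩ Tfam ε y j).card : ℝ) = N.card + M i j := by
      intro i j
      rw [aux_card ε x y hε hx hy i j, hMsum]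
    have hCI : CrossIntersecting (Sfam ε x) (Tfam ε y) {N.card, N.card + 1} := by
      intro i j
      simp only [Set.mem_insert_iff, Set.mem_singleton_iff]
      rcases hM i j with h | h
      · left
        have h2 := hcard i j
        rw [h, add_zero] at h2
        exact_mod_cast h2
      · right
        have h2 := hcard i j
        rw [h] at h2
        exact_mod_cast h2
    obtain ⟨A, B, hA, hB, hconst, hdens⟩ :=
      H (urank M * 3) (by omega) N.card (N.card + 1) (by omega) (by omega)
        m n hm hn (Sfam ε x) (Tfam ε y) hCI
    refine ⟨A, B, hA, hB, ?_, ?_⟩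
    · rcases hconst with h | h
      · refine ⟨0, fun i hi j hj => ?_⟩
        have h2 := hcard i j
        rw [h i hi j hj] at h2
        push_cast at h2
        linarith
      · refine ⟨1, fun i hi j hj => ?_⟩
        have h2 := hcard i j
        rw [h i hi j hj] at h2
        push_cast at h2
        linarith
    · refine le_trans ?_ hdens
      refine mul_le_mul_of_nonneg_right ?_ hmn
      rw [Real.rpow_le_rpow_left_iff one_lt_two, neg_le_neg_iff]
      have hL1 : (1:ℝ) ≤ Real.logb 2 ((urank M : ℝ) + 2) := by
        rw [show (1:ℝ) = Real.logb 2 2 from (Real.logb_self_eq_one one_lt_two).symm]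
        exact Real.logb_le_logb_of_le one_lt_two (by norm_num)
          (le_add_of_nonneg_left (Nat.cast_nonneg _))
      have hL0 : (0:ℝ) ≤ Real.logb 2 ((urank M : ℝ) + 2) := le_trans zero_le_one hL1
      have h3 : Real.logb 2 ((↑(urank M * 3) : ℝ) + 2)
          ≤ 2 * Real.logb 2 ((urank M : ℝ) + 2) := by
        have hle : (↑(urank M * 3) : ℝ) + 2 ≤ ((urank M : ℝ) + 2) ^ 2 := by
          push_cast
          nlinarith [Nat.cast_nonneg (α := ℝ) (urank M)]
        calc Real.logb 2 ((↑(urank M * 3) : ℝ) + 2)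
            ≤ Real.logb 2 (((urank M : ℝ) + 2) ^ 2) :=
              Real.logb_le_logb_of_le one_lt_two (by positivity) hle
          _ = 2 * Real.logb 2 ((urank M : ℝ) + 2) := by
              rw [Real.logb_pow]; norm_num
      have h4 : (Real.logb 2 ((↑(urank M * 3) : ℝ) + 2)) ^ k
          ≤ (2 * Real.logb 2 ((urank M : ℝ) + 2)) ^ k := by
        apply pow_le_pow_left₀ _ h3
        apply Real.logb_nonneg one_lt_two
        have : (0:ℝ) ≤ (↑(urank M * 3) : ℝ) := Nat.cast_nonneg _
        linarith
      calc C * Real.logb 2 ((↑(urank M * 3) : ℝ) + 2) ^ k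
          ≤ C * (2 * Real.logb 2 ((urank M : ℝ) + 2)) ^ k :=
            mul_le_mul_of_nonneg_left h4 hC.le
        _ = C * 2 ^ k * Real.logb 2 ((urank M : ℝ) + 2) ^ k := by
            rw [mul_pow]; ring
end
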